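/- arXiv:1701.03494 — 13 statements merged into one kernel-verified Lean document; each statement's English description precedes it below -/
import Mathlib

section
/- Let D be a distributive lattice with zero, let S be a join-semilattice with zero, and let ∖ be an S-valued difference operation on D. Then for all a₁, b₁, a₂, b₂ ∈ D, if a₁ ≤ b₁ ∨ a₂ and a₁ ∧ b₂ ≤ b₁, then a₁ ∖ b₁ ≤ a₂ ∖ b₂ in S. -/
/-! Put `c = a₁ ⊓ a₂`. Distributivity turns `a₁ ≤ b₁ ⊔ a₂` into `a₁ ≤ c ⊔ b₁`, so
`a₁ ∖ b₁ ≤ c ∖ b₁`; the hypothesis `a₁ ⊓ b₂ ≤ b₁` gives `c ⊓ b₂ ≤ b₁`, so `c ∖ b₁ ≤ c ∖ b₂`;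
and `c ≤ a₂` gives `c ∖ b₂ ≤ a₂ ∖ b₂`. Each comparison is (D1) applied to a chain, after (D2)
has moved the arguments into comparable position. -/

section DifferenceOperation

variable {α β : Type*} [Lattice α] [SemilatticeSup β] {d : α → α → β}
  (hD1 : ∀ x y z : α, z ≤ y → y ≤ x → d x z = d x y ⊔ d y z)
include hD1

theorem diff_le_diff_of_le_sup (hD2 : ∀ x y : α, d x y = d (x ⊔ y) y) {x x' y : α}
    (h : x ≤ x' ⊔ y) : d x y ≤ d x' y := by
  have hchain : x ⊔ y ≤ x' ⊔ y := sup_le h le_sup_right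
  calc d x y = d (x ⊔ y) y := hD2 x y
    _ ≤ d (x' ⊔ y) (x ⊔ y) ⊔ d (x ⊔ y) y := le_sup_right
    _ = d (x' ⊔ y) y := (hD1 _ _ _ le_sup_right hchain).symm
    _ = d x' y := (hD2 x' y).symm

theorem diff_le_diff_of_inf_le (hD2 : ∀ x y : α, d x y = d x (x ⊓ y)) {x y y' : α}
    (h : x ⊓ y' ≤ y) : d x y ≤ d x y' := by
  have hchain : x ⊓ y' ≤ x ⊓ y := le_inf inf_le_left h
  calc d x y = d x (x ⊓ y) := hD2 x y
    _ ≤ d x (x ⊓ y) ⊔ d (x ⊓ y) (x ⊓ y') := le_sup_left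
    _ = d x (x ⊓ y') := (hD1 _ _ _ hchain inf_le_left).symm
    _ = d x y' := (hD2 x y').symm

end DifferenceOperation

theorem le_inf_sup_of_le_sup {α : Type*} [DistribLattice α] {a b c : α} (h : a ≤ b ⊔ c) :
    a ≤ a ⊓ c ⊔ b :=
  calc a ≤ a ⊓ (b ⊔ c) := le_inf le_rfl h
    _ = a ⊓ b ⊔ a ⊓ c := inf_sup_left a b c
    _ ≤ a ⊓ c ⊔ b := sup_le (le_sup_of_le_right inf_le_right) le_sup_left

theorem stmt0_general {D S : Type*} [DistribLattice D]
    [SemilatticeSup S]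
    (d : D → D → S)
    (hD1 : ∀ x y z : D, z ≤ y → y ≤ x → d x z = d x y ⊔ d y z)
    (hD2 : ∀ x y : D, d x y = d (x ⊔ y) y ∧ d x y = d x (x ⊓ y))
    (a₁ b₁ a₂ b₂ : D)
    (h1 : a₁ ≤ b₁ ⊔ a₂) (h2 : a₁ ⊓ b₂ ≤ b₁) :
    d a₁ b₁ ≤ d a₂ b₂ := by
  have hsup : ∀ x y : D, d x y = d (x ⊔ y) y := fun x y => (hD2 x y).1
  have hinf : ∀ x y : D, d x y = d x (x ⊓ y) := fun x y => (hD2 x y).2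
  calc d a₁ b₁ ≤ d (a₁ ⊓ a₂) b₁ := diff_le_diff_of_le_sup hD1 hsup (le_inf_sup_of_le_sup h1)
    _ ≤ d (a₁ ⊓ a₂) b₂ :=
      diff_le_diff_of_inf_le hD1 hinf ((inf_le_inf_right b₂ inf_le_left).trans h2)
    _ ≤ d a₂ b₂ := diff_le_diff_of_le_sup hD1 hsup (le_sup_of_le_left inf_le_right)

/-- Lemma (a₁ ∖ b₁ ≤ a₂ ∖ b₂) for an S-valued difference operation
on a distributive lattice D with zero. -/
theorem stmt0 {D S : Type*} [DistribLattice D] [OrderBot D]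
    [SemilatticeSup S] [OrderBot S]
    (d : D → D → S)
    (hD0 : ∀ x : D, d x x = ⊥)
    (hD1 : ∀ x y z : D, z ≤ y → y ≤ x → d x z = d x y ⊔ d y z)
    (hD2 : ∀ x y : D, d x y = d (x ⊔ y) y ∧ d x y = d x (x ⊓ y))
    (a₁ b₁ a₂ b₂ : D)
    (h1 : a₁ ≤ b₁ ⊔ a₂) (h2 : a₁ ⊓ b₂ ≤ b₁) :
    d a₁ b₁ ≤ d a₂ b₂ :=
  stmt0_general d hD1 hD2 a₁ b₁ a₂ b₂ h1 h2
end

section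
/- Let L be a finite lattice, S a join-semilattice with zero, and ∖ an S-valued difference operation on L. Then for all a, b ∈ L, a ∖ b = ⋁ { p ∖ p⁎ : p join-irreducible in L, p ≤ a, p ≰ b }, where p⁎ denotes the unique lower cover of the join-irreducible element p. -/
/-!
Each `p ∖ p⁎` with `p ≤ a`, `p ≰ b` is below `p ∖ b ≤ a ∖ b`; the converse bound
`a ∖ b ≤ ⋁ p ∖ p⁎` is proved by well-founded induction on `a`. Two consequences of the axioms
drive both: `d (x ⊔ y) b ≤ d x b ⊔ d y b`, which handles a reducible `a = x ⊔ y`, and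
`d p b = d p c ⊔ d c b` whenever `p ⊓ b ≤ c ≤ p`, which for a join-irreducible `p`
and `c = p⁎` peels off the term `p ∖ p⁎`.
-/

structure IsDifferenceOp {L S : Type*} [Lattice L] [SemilatticeSup S] [OrderBot S]
    (d : L → L → S) : Prop where
  self : ∀ x, d x x = ⊥
  trans : ∀ x y z, z ≤ y → y ≤ x → d x z = d x y ⊔ d y z
  sup_left_inf_right : ∀ x y, d x y = d (x ⊔ y) y ∧ d x y = d x (x ⊓ y)

namespace IsDifferenceOp

variable {L S : Type*} [Lattice L] [SemilatticeSup S] [OrderBot S] {d : L → L → S}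
  (hd : IsDifferenceOp d)
include hd

theorem eq_bot_of_le {x y : L} (h : x ≤ y) : d x y = ⊥ := by
  rw [(hd.sup_left_inf_right x y).2, inf_eq_left.2 h, hd.self]

theorem mono_left {x x' z : L} (h : x ≤ x') : d x z ≤ d x' z := by
  rw [(hd.sup_left_inf_right x z).1, (hd.sup_left_inf_right x' z).1,
    hd.trans (x' ⊔ z) (x ⊔ z) z le_sup_right (sup_le_sup_right h z)]
  exact le_sup_right

theorem anti_right {x z z' : L} (h : z' ≤ z) : d x z ≤ d x z' := by
  rw [(hd.sup_left_inf_right x z).2, (hd.sup_left_inf_right x z').2,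
    hd.trans x (x ⊓ z) (x ⊓ z') (inf_le_inf_left x h) inf_le_left]
  exact le_sup_left

theorem sup_left_le (x y z : L) : d (x ⊔ y) z ≤ d x z ⊔ d y z := by
  have hxz : x ⊔ y ⊔ z = y ⊔ (x ⊔ z) := by ac_rfl
  calc d (x ⊔ y) z ≤ d (x ⊔ y ⊔ z) z := hd.mono_left le_sup_left
    _ = d (x ⊔ y ⊔ z) (x ⊔ z) ⊔ d (x ⊔ z) z :=
      hd.trans _ _ _ le_sup_right (sup_le_sup_right le_sup_left z)
    _ = d y (x ⊔ z) ⊔ d x z := by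
      rw [hxz, ← (hd.sup_left_inf_right y _).1, ← (hd.sup_left_inf_right x z).1]
    _ ≤ d y z ⊔ d x z := sup_le_sup_right (hd.anti_right le_sup_right) _
    _ = d x z ⊔ d y z := sup_comm _ _

theorem eq_sup_of_inf_le_of_le {p b c : L} (hbc : p ⊓ b ≤ c) (hcp : c ≤ p) :
    d p b = d p c ⊔ d c b := by
  have hcb : c ⊓ b = p ⊓ b :=
    le_antisymm (inf_le_inf_right b hcp) (le_inf hbc inf_le_right)
  rw [(hd.sup_left_inf_right p b).2, (hd.sup_left_inf_right c b).2, hcb]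
  exact hd.trans p c (p ⊓ b) hbc hcp

end IsDifferenceOp

section SupIrred

variable {L S : Type*} [Lattice L] [SemilatticeSup S] [OrderBot S]

open Classical in
noncomputable def supIrredDiff [Fintype L] (d : L → L → S) (m : L → L) (a b : L) : S :=
  (Finset.univ.filter fun p : L => SupIrred p ∧ p ≤ a ∧ ¬ p ≤ b).sup (fun p => d p (m p))

theorem supIrredDiff_le_iff [Fintype L] {d : L → L → S} {m : L → L} {a b : L} {s : S} :
    supIrredDiff d m a b ≤ s ↔ ∀ p, SupIrred p → p ≤ a → ¬ p ≤ b → d p (m p) ≤ s := by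
  simp [supIrredDiff, Finset.sup_le_iff, and_imp]

theorem le_supIrredDiff_of_supIrred [Fintype L] {d : L → L → S} {m : L → L} {a b p : L}
    (hp : SupIrred p) (hpa : p ≤ a) (hpb : ¬ p ≤ b) : d p (m p) ≤ supIrredDiff d m a b :=
  supIrredDiff_le_iff.1 le_rfl p hp hpa hpb

theorem supIrredDiff_mono_left [Fintype L] {d : L → L → S} {m : L → L} {a a' b : L}
    (h : a ≤ a') : supIrredDiff d m a b ≤ supIrredDiff d m a' b :=
  supIrredDiff_le_iff.2 fun _ hp hpa hpb => le_supIrredDiff_of_supIrred hp (hpa.trans h) hpb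

namespace IsDifferenceOp

variable {d : L → L → S} (hd : IsDifferenceOp d) {m : L → L}
  (hm : ∀ p : L, SupIrred p → m p < p ∧ ∀ x : L, x < p → x ≤ m p)
include hd hm

theorem eq_sup_lowerCover {p b : L} (hp : SupIrred p) (hpb : ¬ p ≤ b) :
    d p b = d p (m p) ⊔ d (m p) b :=
  hd.eq_sup_of_inf_le_of_le ((hm p hp).2 _ (inf_lt_left.2 hpb)) (hm p hp).1.le

theorem supIrredDiff_le [Fintype L] (a b : L) : supIrredDiff d m a b ≤ d a b :=
  supIrredDiff_le_iff.2 fun p hp hpa hpb => calc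
    d p (m p) ≤ d p b := (hd.eq_sup_lowerCover hm hp hpb).symm ▸ le_sup_left
    _ ≤ d a b := hd.mono_left hpa

theorem le_supIrredDiff [Fintype L] (a b : L) : d a b ≤ supIrredDiff d m a b := by
  induction a using WellFoundedLT.induction with
  | _ a ih =>
  by_cases hab : a ≤ b
  · rw [hd.eq_bot_of_le hab]
    exact bot_le
  by_cases ha : SupIrred a
  · have hma : m a < a := (hm a ha).1
    rw [hd.eq_sup_lowerCover hm ha hab]
    exact sup_le (le_supIrredDiff_of_supIrred ha le_rfl hab)
      ((ih _ hma).trans (supIrredDiff_mono_left hma.le))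
  obtain hmin | ⟨x, y, rfl, hx, hy⟩ := not_supIrred.1 ha
  · exact absurd ((hmin inf_le_left).trans inf_le_right) hab
  calc d (x ⊔ y) b ≤ d x b ⊔ d y b := hd.sup_left_le x y b
    _ ≤ supIrredDiff d m (x ⊔ y) b :=
      sup_le ((ih x hx).trans (supIrredDiff_mono_left le_sup_left))
        ((ih y hy).trans (supIrredDiff_mono_left le_sup_right))

end IsDifferenceOp

end SupIrred

open Classical in
/-- in a finite lattice L, for any S-valued difference operation,
a ∖ b is the join of the p ∖ p⁎ over all join-irreducible p ≤ a with p ≰ b,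
where m p = p⁎ is the (unique) lower cover of the join-irreducible p. -/
theorem stmt2 {L S : Type*} [Lattice L] [Fintype L]
    [SemilatticeSup S] [OrderBot S]
    (d : L → L → S)
    (hD0 : ∀ x : L, d x x = ⊥)
    (hD1 : ∀ x y z : L, z ≤ y → y ≤ x → d x z = d x y ⊔ d y z)
    (hD2 : ∀ x y : L, d x y = d (x ⊔ y) y ∧ d x y = d x (x ⊓ y))
    (m : L → L)
    (hm : ∀ p : L, SupIrred p → m p < p ∧ ∀ x : L, x < p → x ≤ m p)
    (a b : L) :
    d a b =
      (Finset.univ.filter fun p : L => SupIrred p ∧ p ≤ a ∧ ¬ p ≤ b).sup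
        (fun p => d p (m p)) := by
  have hd : IsDifferenceOp d := ⟨hD0, hD1, hD2⟩
  exact le_antisymm (hd.le_supIrredDiff hm a b) (hd.supIrredDiff_le hm a b)
end

section
/- Let S be a generalized dual Heyting algebra and a, b₁, b₂ ∈ S with b₁ ∼ b₂ (consonant). Then a ∖ (b₁ ∨ b₂) = (a ∖ b₁) ∧ (a ∖ b₂). -/
/-!
Write `a ∖ b` for `sd a b`. Antitonicity of `a ∖ ·` gives `≤`. Conversely, with `s = a ∖ (b₁ ⊔ b₂)`
and consonance witnesses `x, y`, one gets `a ∖ b₁ ≤ s ⊔ y` and `a ∖ b₂ ≤ s ⊔ x`, so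
by distributivity `(a ∖ b₁) ⊓ (a ∖ b₂) ≤ s ⊔ (y ⊓ x) = s`.
-/

section DualHeyting

variable {S : Type*} [SemilatticeSup S] {sd : S → S → S}

theorem sd_antitone_right (hsd1 : ∀ a b : S, a ≤ b ⊔ sd a b)
    (hsd2 : ∀ a b x : S, a ≤ b ⊔ x → sd a b ≤ x) (a : S) {b c : S} (h : b ≤ c) :
    sd a c ≤ sd a b :=
  hsd2 _ _ _ ((hsd1 a b).trans (sup_le_sup_right h _))

theorem sd_le_sd_sup_sup_of_le_sup (hsd1 : ∀ a b : S, a ≤ b ⊔ sd a b)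
    (hsd2 : ∀ a b x : S, a ≤ b ⊔ x → sd a b ≤ x) (a : S) {b₁ b₂ y : S}
    (h : b₂ ≤ b₁ ⊔ y) : sd a b₁ ≤ sd a (b₁ ⊔ b₂) ⊔ y := by
  refine hsd2 _ _ _ ((hsd1 a (b₁ ⊔ b₂)).trans ?_)
  have hb₂ : b₂ ≤ b₁ ⊔ (sd a (b₁ ⊔ b₂) ⊔ y) := h.trans (sup_le_sup_left le_sup_right _)
  exact sup_le (sup_le le_sup_left hb₂) (le_sup_of_le_right le_sup_left)

end DualHeyting

/-- in a generalized dual Heyting algebra, if b₁ ∼ b₂ then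
a ∖ (b₁ ∨ b₂) = (a ∖ b₁) ∧ (a ∖ b₂). -/
theorem stmt5 {S : Type*} [DistribLattice S] [OrderBot S]
    (sd : S → S → S)
    (hsd1 : ∀ a b : S, a ≤ b ⊔ sd a b)
    (hsd2 : ∀ a b x : S, a ≤ b ⊔ x → sd a b ≤ x)
    (a b₁ b₂ : S)
    (hcons : ∃ x y : S, b₁ ≤ b₂ ⊔ x ∧ b₂ ≤ b₁ ⊔ y ∧ x ⊓ y = ⊥) :
    sd a (b₁ ⊔ b₂) = sd a b₁ ⊓ sd a b₂ := by
  obtain ⟨x, y, hx, hy, hxy⟩ := hcons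
  refine le_antisymm (le_inf (sd_antitone_right hsd1 hsd2 a le_sup_left)
    (sd_antitone_right hsd1 hsd2 a le_sup_right)) ?_
  have h₁ := sd_le_sd_sup_sup_of_le_sup hsd1 hsd2 a hy
  have h₂ := sd_le_sd_sup_sup_of_le_sup hsd1 hsd2 a hx
  rw [sup_comm b₂] at h₂
  calc sd a b₁ ⊓ sd a b₂ ≤ (sd a (b₁ ⊔ b₂) ⊔ y) ⊓ (sd a (b₁ ⊔ b₂) ⊔ x) := inf_le_inf h₁ h₂
    _ = sd a (b₁ ⊔ b₂) ⊔ (y ⊓ x) := (sup_inf_left _ _ _).symm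
    _ = sd a (b₁ ⊔ b₂) := by rw [inf_comm, hxy, sup_bot_eq]
end

section
/- Let S be a generalized dual Heyting algebra and a₁, a₂, b₁, b₂ ∈ S. If a₁ ∼ a₂ (consonant) and a₁ ∧ a₂ ≤ b₁ ∧ b₂, then (a₁ ∖ b₁) ∧ (a₂ ∖ b₂) = 0. -/
theorem le_sup_of_le_sup_of_inf_le {S : Type*} [DistribLattice S] {a b c x : S}
    (hac : a ≤ c ⊔ x) (hab : a ⊓ c ≤ b) : a ≤ b ⊔ x :=
  calc a = a ⊓ (c ⊔ x) := (inf_eq_left.mpr hac).symm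
    _ = a ⊓ c ⊔ a ⊓ x := inf_sup_left a c x
    _ ≤ b ⊔ x := sup_le_sup hab inf_le_right

theorem stmt7_general {S : Type*} [DistribLattice S] [OrderBot S]
    (sd : S → S → S)
    (hsd2 : ∀ a b x : S, a ≤ b ⊔ x → sd a b ≤ x)
    (a₁ a₂ b₁ b₂ : S)
    (hcons : ∃ x y : S, a₁ ≤ a₂ ⊔ x ∧ a₂ ≤ a₁ ⊔ y ∧ x ⊓ y = ⊥)
    (hle : a₁ ⊓ a₂ ≤ b₁ ⊓ b₂) :
    sd a₁ b₁ ⊓ sd a₂ b₂ = ⊥ := by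
  obtain ⟨x, y, h₁, h₂, hxy⟩ := hcons
  have hx : sd a₁ b₁ ≤ x :=
    hsd2 _ _ _ (le_sup_of_le_sup_of_inf_le h₁ (hle.trans inf_le_left))
  have hy : sd a₂ b₂ ≤ y :=
    hsd2 _ _ _ (le_sup_of_le_sup_of_inf_le h₂ ((inf_comm a₂ a₁ ▸ hle).trans inf_le_right))
  exact ((disjoint_iff.mpr hxy).mono hx hy).eq_bot

/-- in a generalized dual Heyting algebra, if a₁ ∼ a₂ and
a₁ ∧ a₂ ≤ b₁ ∧ b₂ then (a₁ ∖ b₁) ∧ (a₂ ∖ b₂) = 0. -/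
theorem stmt7 {S : Type*} [DistribLattice S] [OrderBot S]
    (sd : S → S → S)
    (hsd1 : ∀ a b : S, a ≤ b ⊔ sd a b)
    (hsd2 : ∀ a b x : S, a ≤ b ⊔ x → sd a b ≤ x)
    (a₁ a₂ b₁ b₂ : S)
    (hcons : ∃ x y : S, a₁ ≤ a₂ ⊔ x ∧ a₂ ≤ a₁ ⊔ y ∧ x ⊓ y = ⊥)
    (hle : a₁ ⊓ a₂ ≤ b₁ ⊓ b₂) :
    sd a₁ b₁ ⊓ sd a₂ b₂ = ⊥ :=
  stmt7_general sd hsd2 a₁ a₂ b₁ b₂ hcons hle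
end

section
/- Let D and L be distributive lattices, E and S generalized dual Heyting algebras with D a sublattice of E and S a sublattice of L, and let g : E → L be a lattice homomorphism such that g[D] is a consonant subset of S. Let Σ ⊆ D generate D as a lattice. If g(x ∖_E y) ≤ g(x) ∖_S g(y) for all x, y ∈ Σ, then g(x ∖_E y) ≤ g(x) ∖_S g(y) for all x, y ∈ D. -/
/-!
The inequality `g (x ∖_E y) ≤ g x ∖_S g y` is preserved by joins and meets in either argument, so it
passes from the generators to the sublattice they generate. Joins in the first argument and meets in
the second are harmless: `∖_E` turns them into joins, and `∖_S` is monotone in its first argument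
and antitone in its second. Meets in the first argument turn into meets, which need consonance: if
`a ≤ b ⊔ x`, `b ≤ a ⊔ y` and `x ⊓ y = ⊥`, then with `s = (a ⊓ b) ∖ c` we get `a ∖ c ≤ s ⊔ x` and
`b ∖ c ≤ s ⊔ y`, so by distributivity `(a ∖ c) ⊓ (b ∖ c) ≤ s ⊔ (x ⊓ y) = s`. Joins in the second
argument are handled in the same way.
-/

open Set

section

variable {E L : Type*}

theorem isSublattice_iff_forall [Lattice E] {s : Set E} :
    IsSublattice s ↔ ∀ x ∈ s, ∀ y ∈ s, x ⊔ y ∈ s ∧ x ⊓ y ∈ s :=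
  ⟨fun h _ hx _ hy => ⟨h.supClosed hx hy, h.infClosed hx hy⟩,
    fun h => ⟨fun _ hx _ hy => (h _ hx _ hy).1, fun _ hx _ hy => (h _ hx _ hy).2⟩⟩

theorem inf_le_of_le_sup_of_inf_le [DistribLattice L] {p q s x y : L}
    (hp : p ≤ s ⊔ x) (hq : q ≤ s ⊔ y) (hxy : x ⊓ y ≤ s) : p ⊓ q ≤ s :=
  calc p ⊓ q ≤ (s ⊔ x) ⊓ (s ⊔ y) := inf_le_inf hp hq
    _ = s ⊔ x ⊓ y := (sup_inf_left _ _ _).symm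
    _ = s := sup_eq_left.2 hxy

def IsPseudoDiff [Lattice E] (sd : E → E → E) : Prop :=
  ∀ a b x, sd a b ≤ x ↔ a ≤ b ⊔ x

namespace IsPseudoDiff

variable {sd : E → E → E} {a b b' c : E}

section Lattice

variable [Lattice E]

theorem le_sup (h : IsPseudoDiff sd) (a b : E) : a ≤ b ⊔ sd a b :=
  (h a b _).1 le_rfl

theorem anti_right (h : IsPseudoDiff sd) (hb : b ≤ b') : sd a b' ≤ sd a b :=
  (h _ _ _).2 <| (h.le_sup a b).trans (sup_le_sup_right hb _)

theorem sup_left_le (h : IsPseudoDiff sd) : sd (a ⊔ b) c ≤ sd a c ⊔ sd b c :=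
  (h _ _ _).2 <| calc
    a ⊔ b ≤ (c ⊔ sd a c) ⊔ (c ⊔ sd b c) := sup_le_sup (h.le_sup a c) (h.le_sup b c)
    _ = c ⊔ (sd a c ⊔ sd b c) := by rw [sup_sup_sup_comm, sup_idem]

theorem sup_right_le (h : IsPseudoDiff sd) : sd a (b ⊔ c) ≤ sd a b ⊓ sd a c :=
  le_inf (h.anti_right le_sup_left) (h.anti_right le_sup_right)

end Lattice

section DistribLattice

variable [DistribLattice E]

theorem inf_left_le (h : IsPseudoDiff sd) : sd (a ⊓ b) c ≤ sd a c ⊓ sd b c :=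
  (h _ _ _).2 <| calc
    a ⊓ b ≤ (c ⊔ sd a c) ⊓ (c ⊔ sd b c) := inf_le_inf (h.le_sup a c) (h.le_sup b c)
    _ = c ⊔ sd a c ⊓ sd b c := (sup_inf_left _ _ _).symm

theorem inf_right_le (h : IsPseudoDiff sd) : sd a (b ⊓ c) ≤ sd a b ⊔ sd a c :=
  (h _ _ _).2 <| by
    rw [sup_inf_right]
    exact le_inf ((h.le_sup a b).trans (sup_le_sup_left le_sup_left _))
      ((h.le_sup a c).trans (sup_le_sup_left le_sup_right _))

end DistribLattice

end IsPseudoDiff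

structure IsPseudoDiffOn [Lattice L] (S : Set L) (sd : L → L → L) : Prop where
  mem : ∀ a ∈ S, ∀ b ∈ S, sd a b ∈ S
  le_sup : ∀ a ∈ S, ∀ b ∈ S, a ≤ b ⊔ sd a b
  le_of_le_sup : ∀ a ∈ S, ∀ b ∈ S, ∀ x ∈ S, a ≤ b ⊔ x → sd a b ≤ x

namespace IsPseudoDiffOn

variable {S : Set L} {sd : L → L → L} {a a' b b' c x y : L}

section Lattice

variable [Lattice L]

theorem mono_left (h : IsPseudoDiffOn S sd) (ha : a ∈ S) (ha' : a' ∈ S) (hc : c ∈ S)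
    (haa' : a ≤ a') : sd a c ≤ sd a' c :=
  h.le_of_le_sup _ ha _ hc _ (h.mem _ ha' _ hc) (haa'.trans (h.le_sup _ ha' _ hc))

theorem anti_right (h : IsPseudoDiffOn S sd) (ha : a ∈ S) (hb : b ∈ S) (hb' : b' ∈ S)
    (hbb' : b ≤ b') : sd a b' ≤ sd a b :=
  h.le_of_le_sup _ ha _ hb' _ (h.mem _ ha _ hb)
    ((h.le_sup _ ha _ hb).trans (sup_le_sup_right hbb' _))

theorem sup_le_sup_left (h : IsPseudoDiffOn S sd) (hS : SupClosed S) (ha : a ∈ S) (hb : b ∈ S)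
    (hc : c ∈ S) : sd a c ⊔ sd b c ≤ sd (a ⊔ b) c :=
  sup_le (h.mono_left ha (hS ha hb) hc le_sup_left) (h.mono_left hb (hS ha hb) hc le_sup_right)

theorem sup_le_inf_right (h : IsPseudoDiffOn S sd) (hS : InfClosed S) (ha : a ∈ S) (hb : b ∈ S)
    (hc : c ∈ S) : sd a b ⊔ sd a c ≤ sd a (b ⊓ c) :=
  sup_le (h.anti_right ha (hS hb hc) hb inf_le_left) (h.anti_right ha (hS hb hc) hc inf_le_right)

theorem le_sup_right_sup (h : IsPseudoDiffOn S sd) (hS : SupClosed S) (ha : a ∈ S) (hb : b ∈ S)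
    (hc : c ∈ S) (hy : y ∈ S) (hcb : c ≤ b ⊔ y) : sd a b ≤ sd a (b ⊔ c) ⊔ y := by
  refine h.le_of_le_sup _ ha _ hb _ (hS (h.mem _ ha _ (hS hb hc)) hy) ?_
  calc a ≤ b ⊔ c ⊔ sd a (b ⊔ c) := h.le_sup _ ha _ (hS hb hc)
    _ ≤ b ⊔ (b ⊔ y) ⊔ sd a (b ⊔ c) := by gcongr
    _ = b ⊔ (sd a (b ⊔ c) ⊔ y) := by ac_rfl

end Lattice

section DistribLattice

variable [DistribLattice L]

theorem le_inf_left_sup (h : IsPseudoDiffOn S sd) (hS : IsSublattice S) (ha : a ∈ S) (hb : b ∈ S)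
    (hc : c ∈ S) (hx : x ∈ S) (hab : a ≤ b ⊔ x) : sd a c ≤ sd (a ⊓ b) c ⊔ x := by
  have hab' : a ⊓ b ∈ S := hS.infClosed ha hb
  refine h.le_of_le_sup _ ha _ hc _ (hS.supClosed (h.mem _ hab' _ hc) hx) ?_
  calc a = a ⊓ b ⊔ a ⊓ x := by rw [← inf_sup_left, inf_eq_left.2 hab]
    _ ≤ (c ⊔ sd (a ⊓ b) c) ⊔ x := sup_le_sup (h.le_sup _ hab' _ hc) inf_le_right
    _ = c ⊔ (sd (a ⊓ b) c ⊔ x) := sup_assoc _ _ _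

variable [OrderBot L]

theorem inf_le_inf_left (h : IsPseudoDiffOn S sd) (hS : IsSublattice S) (ha : a ∈ S) (hb : b ∈ S)
    (hc : c ∈ S) (hx : x ∈ S) (hy : y ∈ S) (hax : a ≤ b ⊔ x) (hby : b ≤ a ⊔ y)
    (hxy : x ⊓ y = ⊥) : sd a c ⊓ sd b c ≤ sd (a ⊓ b) c :=
  inf_le_of_le_sup_of_inf_le (h.le_inf_left_sup hS ha hb hc hx hax)
    (inf_comm b a ▸ h.le_inf_left_sup hS hb ha hc hy hby) (hxy ▸ bot_le)

theorem inf_le_sup_right (h : IsPseudoDiffOn S sd) (hS : SupClosed S) (ha : a ∈ S) (hb : b ∈ S)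
    (hc : c ∈ S) (hx : x ∈ S) (hy : y ∈ S) (hbx : b ≤ c ⊔ x) (hcy : c ≤ b ⊔ y)
    (hxy : x ⊓ y = ⊥) : sd a b ⊓ sd a c ≤ sd a (b ⊔ c) :=
  inf_le_of_le_sup_of_inf_le (h.le_sup_right_sup hS ha hb hc hy hcy)
    (sup_comm c b ▸ h.le_sup_right_sup hS ha hc hb hx hbx) (inf_comm x y ▸ hxy ▸ bot_le)

end DistribLattice

end IsPseudoDiffOn

def IsConsonant [Lattice L] [OrderBot L] (S X : Set L) : Prop :=
  ∀ a ∈ X, ∀ b ∈ X, ∃ x ∈ S, ∃ y ∈ S, a ≤ b ⊔ x ∧ b ≤ a ⊔ y ∧ x ⊓ y = ⊥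

section LatticeHom

variable [DistribLattice E] [DistribLattice L] {S X : Set L} {sdE : E → E → E} {sdS : L → L → L}
  {g : LatticeHom E L} {a b c : E}

theorem map_pseudoDiff_le_sup_left (hE : IsPseudoDiff sdE) (hsdS : IsPseudoDiffOn S sdS)
    (hS : SupClosed S) (ha : g a ∈ S) (hb : g b ∈ S) (hc : g c ∈ S)
    (hac : g (sdE a c) ≤ sdS (g a) (g c)) (hbc : g (sdE b c) ≤ sdS (g b) (g c)) :
    g (sdE (a ⊔ b) c) ≤ sdS (g (a ⊔ b)) (g c) :=
  calc g (sdE (a ⊔ b) c) ≤ g (sdE a c ⊔ sdE b c) := OrderHomClass.mono g hE.sup_left_le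
    _ = g (sdE a c) ⊔ g (sdE b c) := map_sup g _ _
    _ ≤ sdS (g a) (g c) ⊔ sdS (g b) (g c) := sup_le_sup hac hbc
    _ ≤ sdS (g a ⊔ g b) (g c) := hsdS.sup_le_sup_left hS ha hb hc
    _ = sdS (g (a ⊔ b)) (g c) := by rw [map_sup]

theorem map_pseudoDiff_le_inf_right (hE : IsPseudoDiff sdE) (hsdS : IsPseudoDiffOn S sdS)
    (hS : InfClosed S) (ha : g a ∈ S) (hb : g b ∈ S) (hc : g c ∈ S)
    (hab : g (sdE a b) ≤ sdS (g a) (g b)) (hac : g (sdE a c) ≤ sdS (g a) (g c)) :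
    g (sdE a (b ⊓ c)) ≤ sdS (g a) (g (b ⊓ c)) :=
  calc g (sdE a (b ⊓ c)) ≤ g (sdE a b ⊔ sdE a c) := OrderHomClass.mono g hE.inf_right_le
    _ = g (sdE a b) ⊔ g (sdE a c) := map_sup g _ _
    _ ≤ sdS (g a) (g b) ⊔ sdS (g a) (g c) := sup_le_sup hab hac
    _ ≤ sdS (g a) (g b ⊓ g c) := hsdS.sup_le_inf_right hS ha hb hc
    _ = sdS (g a) (g (b ⊓ c)) := by rw [map_inf]

variable [OrderBot L]

theorem map_pseudoDiff_le_inf_left (hE : IsPseudoDiff sdE) (hsdS : IsPseudoDiffOn S sdS)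
    (hS : IsSublattice S) (hXS : X ⊆ S) (hX : IsConsonant S X) (ha : g a ∈ X) (hb : g b ∈ X)
    (hc : g c ∈ S) (hac : g (sdE a c) ≤ sdS (g a) (g c)) (hbc : g (sdE b c) ≤ sdS (g b) (g c)) :
    g (sdE (a ⊓ b) c) ≤ sdS (g (a ⊓ b)) (g c) := by
  obtain ⟨x, hx, y, hy, hax, hby, hxy⟩ := hX _ ha _ hb
  calc g (sdE (a ⊓ b) c) ≤ g (sdE a c ⊓ sdE b c) := OrderHomClass.mono g hE.inf_left_le
    _ = g (sdE a c) ⊓ g (sdE b c) := map_inf g _ _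
    _ ≤ sdS (g a) (g c) ⊓ sdS (g b) (g c) := inf_le_inf hac hbc
    _ ≤ sdS (g a ⊓ g b) (g c) :=
      hsdS.inf_le_inf_left hS (hXS ha) (hXS hb) hc hx hy hax hby hxy
    _ = sdS (g (a ⊓ b)) (g c) := by rw [map_inf]

theorem map_pseudoDiff_le_sup_right (hE : IsPseudoDiff sdE) (hsdS : IsPseudoDiffOn S sdS)
    (hS : SupClosed S) (hXS : X ⊆ S) (hX : IsConsonant S X) (ha : g a ∈ S) (hb : g b ∈ X)
    (hc : g c ∈ X) (hab : g (sdE a b) ≤ sdS (g a) (g b)) (hac : g (sdE a c) ≤ sdS (g a) (g c)) :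
    g (sdE a (b ⊔ c)) ≤ sdS (g a) (g (b ⊔ c)) := by
  obtain ⟨x, hx, y, hy, hbx, hcy, hxy⟩ := hX _ hb _ hc
  calc g (sdE a (b ⊔ c)) ≤ g (sdE a b ⊓ sdE a c) := OrderHomClass.mono g hE.sup_right_le
    _ = g (sdE a b) ⊓ g (sdE a c) := map_inf g _ _
    _ ≤ sdS (g a) (g b) ⊓ sdS (g a) (g c) := inf_le_inf hab hac
    _ ≤ sdS (g a) (g b ⊔ g c) :=
      hsdS.inf_le_sup_right hS ha (hXS hb) (hXS hc) hx hy hbx hcy hxy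
    _ = sdS (g a) (g (b ⊔ c)) := by rw [map_sup]

theorem map_pseudoDiff_le_of_mem_latticeClosure (hE : IsPseudoDiff sdE)
    (hsdS : IsPseudoDiffOn S sdS) (hS : IsSublattice S) {Sg : Set E}
    (hgS : g '' latticeClosure Sg ⊆ S) (hX : IsConsonant S (g '' latticeClosure Sg))
    (hbase : ∀ x ∈ Sg, ∀ y ∈ Sg, g (sdE x y) ≤ sdS (g x) (g y)) :
    ∀ x ∈ latticeClosure Sg, ∀ y ∈ latticeClosure Sg, g (sdE x y) ≤ sdS (g x) (g y) := by
  have mem {z : E} (hz : z ∈ latticeClosure Sg) : g z ∈ g '' latticeClosure Sg :=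
    mem_image_of_mem g hz
  have generator_right : ∀ y ∈ Sg, ∀ x ∈ latticeClosure Sg, g (sdE x y) ≤ sdS (g x) (g y) := by
    intro y hy x hx
    have hgy := hgS (mem (subset_latticeClosure hy))
    induction hx using latticeClosure_sup_inf_induction with
    | mem x hx => exact hbase x hx y hy
    | sup a ha b hb iha ihb =>
      exact map_pseudoDiff_le_sup_left hE hsdS hS.supClosed (hgS (mem ha)) (hgS (mem hb)) hgy
        iha ihb
    | inf a ha b hb iha ihb =>
      exact map_pseudoDiff_le_inf_left hE hsdS hS hgS hX (mem ha) (mem hb) hgy iha ihb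
  intro x hx y hy
  have hgx := hgS (mem hx)
  induction hy using latticeClosure_sup_inf_induction with
  | mem y hy => exact generator_right y hy x hx
  | sup a ha b hb iha ihb =>
    exact map_pseudoDiff_le_sup_right hE hsdS hS.supClosed hgS hX hgx (mem ha) (mem hb) iha ihb
  | inf a ha b hb iha ihb =>
    exact map_pseudoDiff_le_inf_right hE hsdS hS.infClosed hgx (hgS (mem ha)) (hgS (mem hb)) iha ihb

end LatticeHom

end

/-- Lemma on generation of the inequality g(x ∖_E y) ≤ g(x) ∖_S g(y)
from a generating set Σ of the sublattice D of E, when g[D] is a consonant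
subset of the sublattice S of L. Sublattices are modelled as subsets closed
under ⊔ and ⊓, and pseudo-differences by their least-element property. -/
theorem stmt9 {E L : Type*} [DistribLattice E] [DistribLattice L] [OrderBot L]
    (D : Set E) (hDsub : ∀ x ∈ D, ∀ y ∈ D, x ⊔ y ∈ D ∧ x ⊓ y ∈ D)
    (S : Set L) (hSsub : ∀ x ∈ S, ∀ y ∈ S, x ⊔ y ∈ S ∧ x ⊓ y ∈ S)
    -- E is a generalized dual Heyting algebra with pseudo-difference sdE
    (sdE : E → E → E)
    (hsdE1 : ∀ a b : E, a ≤ b ⊔ sdE a b)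
    (hsdE2 : ∀ a b x : E, a ≤ b ⊔ x → sdE a b ≤ x)
    -- S is a generalized dual Heyting algebra with pseudo-difference sdS
    (sdS : L → L → L)
    (hsdS0 : ∀ a ∈ S, ∀ b ∈ S, sdS a b ∈ S)
    (hsdS1 : ∀ a ∈ S, ∀ b ∈ S, a ≤ b ⊔ sdS a b)
    (hsdS2 : ∀ a ∈ S, ∀ b ∈ S, ∀ x ∈ S, a ≤ b ⊔ x → sdS a b ≤ x)
    -- g : E → L is a lattice homomorphism mapping D into S
    (g : E → L)
    (hgsup : ∀ x y : E, g (x ⊔ y) = g x ⊔ g y)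
    (hginf : ∀ x y : E, g (x ⊓ y) = g x ⊓ g y)
    (hgD : ∀ x ∈ D, g x ∈ S)
    -- g[D] is a consonant subset of S
    (hcons : ∀ a ∈ D, ∀ b ∈ D, ∃ x ∈ S, ∃ y ∈ S,
      g a ≤ g b ⊔ x ∧ g b ≤ g a ⊔ y ∧ x ⊓ y = ⊥)
    -- Sg generates D as a lattice
    (Sg : Set E) (hSgD : Sg ⊆ D)
    (hgen : ∀ T : Set E, Sg ⊆ T →
      (∀ x ∈ T, ∀ y ∈ T, x ⊔ y ∈ T ∧ x ⊓ y ∈ T) → D ⊆ T)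
    (hbase : ∀ x ∈ Sg, ∀ y ∈ Sg, g (sdE x y) ≤ sdS (g x) (g y)) :
    ∀ x ∈ D, ∀ y ∈ D, g (sdE x y) ≤ sdS (g x) (g y) := by
  have hD : D = latticeClosure Sg :=
    (hgen _ subset_latticeClosure (isSublattice_iff_forall.1 isSublattice_latticeClosure)).antisymm
      (latticeClosure_min hSgD (isSublattice_iff_forall.2 hDsub))
  subst hD
  let f : LatticeHom E L := { toFun := g, map_sup' := hgsup, map_inf' := hginf }
  exact map_pseudoDiff_le_of_mem_latticeClosure (g := f)
    (fun a b x => ⟨fun h => (hsdE1 a b).trans (sup_le_sup_left h b), hsdE2 a b x⟩)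
    ⟨hsdS0, hsdS1, hsdS2⟩ (isSublattice_iff_forall.2 hSsub) (image_subset_iff.2 hgD)
    (by rintro _ ⟨a, ha, rfl⟩ _ ⟨b, hb, rfl⟩; exact hcons a ha b hb) hbase
end

section
/- A generalized spectral space X is completely normal if and only if its lattice of compact open subsets is completely normal as a distributive lattice. -/
/-!
Both conditions are read through the specialization order `⤳`. If the lattice is completely
normal and `x`, `y` are incomparable specializations of `z`, separate them by compact opens
`a ∋ x`, `b ∋ y` with `y ∉ a`, `x ∉ b`; the witnesses `u ∋ x`, `v ∋ y` are then open
neighbourhoods of `z`, contradicting `u ∩ v = ∅`.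

Conversely, if `a`, `b` admit no disjoint witnesses, the sets `u ∩ v` form a filtered family of
nonempty compact opens, which in a sober space has a common point `z` (Hofmann–Mislove: a minimal
closed set meeting every member is irreducible, and its generic point lies in every member).
Compactness of `a \ b` shows that `z` specializes to a point of `a \ b`, and symmetrically to a
point of `b \ a`; these two points are incomparable.
-/

open Set Topology TopologicalSpace

def IsCompletelyNormalLattice (L : Type*) [Lattice L] [OrderBot L] : Prop :=
  ∀ a b : L, ∃ x y : L, a ≤ b ⊔ x ∧ b ≤ a ⊔ y ∧ x ⊓ y = ⊥

section HofmannMislove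

variable {X : Type*} [TopologicalSpace X] {ι : Type*} {t : ι → Set X}

lemma exists_minimal_isClosed_forall_inter_nonempty (ht : ∀ i, IsCompact (t i))
    (hne : ∀ i, (t i).Nonempty) :
    ∃ C, Minimal (fun C ↦ IsClosed C ∧ ∀ i, (C ∩ t i).Nonempty) C := by
  refine (zorn_superset_nonempty {C | IsClosed C ∧ ∀ i, (C ∩ t i).Nonempty}
    (fun c hcS hc hcne ↦ ⟨⋂₀ c, ⟨isClosed_sInter fun C hC ↦ (hcS hC).1, fun i ↦ ?_⟩,
      fun _ ↦ sInter_subset_of_mem⟩) univ ⟨isClosed_univ, by simpa using hne⟩).imp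
    fun _ hC ↦ hC.2
  have : Nonempty c := hcne.to_subtype
  by_contra hempty
  rw [inter_comm, sInter_eq_iInter, not_nonempty_iff_eq_empty] at hempty
  obtain ⟨C, hC⟩ := (ht i).elim_directed_family_closed (fun C : c ↦ (C : Set X))
    (fun C ↦ (hcS C.2).1) hempty
    (hc.symm.directedOn (r := fun C D : Set X ↦ D ⊆ C)).directed_val
  exact ((hcS C.2).2 i).ne_empty (by rwa [inter_comm])

lemma Minimal.isIrreducible_of_directed [Nonempty ι] (hdir : Directed (· ⊇ ·) t) {C : Set X}
    (hC : Minimal (fun C ↦ IsClosed C ∧ ∀ i, (C ∩ t i).Nonempty) C) : IsIrreducible C := by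
  have inter_subset : ∀ u, IsOpen u → (C ∩ u).Nonempty → ∃ i, C ∩ t i ⊆ u := by
    intro u hu ⟨x, hxC, hxu⟩
    by_contra! h
    have hCu : IsClosed (C \ u) ∧ ∀ i, (C \ u ∩ t i).Nonempty := ⟨hC.prop.1.sdiff hu,
      fun i ↦ by
        obtain ⟨y, ⟨hyC, hyt⟩, hyu⟩ := not_subset.1 (h i)
        exact ⟨y, ⟨hyC, hyu⟩, hyt⟩⟩
    exact (hC.le_of_le hCu sdiff_subset hxC).2 hxu
  refine ⟨(hC.prop.2 (Classical.arbitrary ι)).mono inter_subset_left,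
    fun u v hu hv hCu hCv ↦ ?_⟩
  obtain ⟨i, hi⟩ := inter_subset u hu hCu
  obtain ⟨j, hj⟩ := inter_subset v hv hCv
  obtain ⟨k, hki, hkj⟩ := hdir i j
  obtain ⟨x, hxC, hxk⟩ := hC.prop.2 k
  exact ⟨x, hxC, hi ⟨hxC, hki hxk⟩, hj ⟨hxC, hkj hxk⟩⟩

theorem nonempty_iInter_of_directed_isCompact_isOpen [QuasiSober X] [Nonempty ι]
    (hdir : Directed (· ⊇ ·) t) (htc : ∀ i, IsCompact (t i)) (hto : ∀ i, IsOpen (t i))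
    (hne : ∀ i, (t i).Nonempty) : (⋂ i, t i).Nonempty := by
  obtain ⟨C, hC⟩ := exists_minimal_isClosed_forall_inter_nonempty htc hne
  have hz := (hC.isIrreducible_of_directed hdir).isGenericPoint_genericPoint hC.prop.1
  exact ⟨_, mem_iInter.2 fun i ↦ (hz.mem_open_set_iff (hto i)).2 (hC.prop.2 i)⟩

end HofmannMislove

namespace TopologicalSpace.CompactOpens

variable {X : Type*} [TopologicalSpace X]

instance instDistribLattice [QuasiSeparatedSpace X] : DistribLattice (CompactOpens X) :=
  SetLike.coe_injective.distribLattice _ .rfl .rfl coe_sup coe_inf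

lemma exists_mem_notMem_of_not_specializes [PrespectralSpace X] {x y : X} (h : ¬y ⤳ x) :
    ∃ a : CompactOpens X, x ∈ a ∧ y ∉ a := by
  obtain ⟨s, hs, hxs, hys⟩ : ∃ s, IsOpen s ∧ x ∈ s ∧ y ∉ s := by
    simpa [specializes_iff_forall_open] using h
  obtain ⟨a, ⟨hao, hac⟩, hxa, has⟩ :=
    PrespectralSpace.isTopologicalBasis.exists_subset_of_mem_open hxs hs
  exact ⟨⟨⟨a, hac⟩, hao⟩, hxa, fun hya ↦ hys (has hya)⟩

lemma exists_specializes_mem_sdiff [PrespectralSpace X] {a b : CompactOpens X} {z : X}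
    (h : ∀ u : CompactOpens X, a ≤ b ⊔ u → z ∈ u) : ∃ x ∈ (a : Set X) \ b, z ⤳ x := by
  by_contra! hz
  have hsub : (a : Set X) \ b ⊆ (closure {z})ᶜ := fun x hx ↦ by
    simpa [← specializes_iff_mem_closure] using hz x hx
  obtain ⟨w, hwc, hwo, haw, hwz⟩ := PrespectralSpace.exists_isCompact_and_isOpen_between
    (a.isCompact.diff b.isOpen) isClosed_closure.isOpen_compl hsub
  have hab : a ≤ b ⊔ ⟨⟨w, hwc⟩, hwo⟩ := fun x hxa ↦ by
    by_cases hxb : x ∈ b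
    · exact Or.inl hxb
    · exact Or.inr (haw ⟨hxa, hxb⟩)
  exact hwz (h _ hab) (subset_closure rfl)

end TopologicalSpace.CompactOpens

section CompletelyNormal

open CompactOpens

variable {X : Type*} [TopologicalSpace X] [PrespectralSpace X] [QuasiSeparatedSpace X]

lemma isCompletelyNormalLattice_compactOpens_of_specializes [QuasiSober X]
    (h : ∀ x y z : X, z ⤳ x → z ⤳ y → y ⤳ x ∨ x ⤳ y) :
    IsCompletelyNormalLattice (CompactOpens X) := by
  intro a b
  by_contra! hab
  let ι := {p : CompactOpens X × CompactOpens X // a ≤ b ⊔ p.1 ∧ b ≤ a ⊔ p.2}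
  let t : ι → Set X := fun p ↦ ↑(p.1.1 ⊓ p.1.2)
  have hdir : Directed (· ⊇ ·) t := fun p q ↦
    ⟨⟨(p.1.1 ⊓ q.1.1, p.1.2 ⊓ q.1.2), by rw [sup_inf_left]; exact le_inf p.2.1 q.2.1,
      by rw [sup_inf_left]; exact le_inf p.2.2 q.2.2⟩,
      SetLike.coe_subset_coe.2 (inf_le_inf inf_le_left inf_le_left),
      SetLike.coe_subset_coe.2 (inf_le_inf inf_le_right inf_le_right)⟩
  have : Nonempty ι := ⟨⟨(a, b), le_sup_right, le_sup_right⟩⟩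
  obtain ⟨z, hz⟩ := nonempty_iInter_of_directed_isCompact_isOpen hdir
    (fun p ↦ (p.1.1 ⊓ p.1.2).isCompact) (fun p ↦ (p.1.1 ⊓ p.1.2).isOpen)
    (fun p ↦ nonempty_iff_ne_empty.2 fun hp ↦ hab _ _ p.2.1 p.2.2 (CompactOpens.ext hp))
  obtain ⟨x, ⟨hxa, hxb⟩, hzx⟩ :=
    exists_specializes_mem_sdiff fun u hu ↦ (mem_iInter.1 hz ⟨(u, b), hu, le_sup_right⟩).1
  obtain ⟨y, ⟨hyb, hya⟩, hzy⟩ :=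
    exists_specializes_mem_sdiff fun v hv ↦ (mem_iInter.1 hz ⟨(a, v), le_sup_right, hv⟩).2
  rcases h x y z hzx hzy with hyx | hxy
  · exact hya (hyx.mem_open a.isOpen hxa)
  · exact hxb (hxy.mem_open b.isOpen hyb)

lemma specializes_total_of_isCompletelyNormalLattice
    (h : IsCompletelyNormalLattice (CompactOpens X)) {x y z : X} (hx : z ⤳ x) (hy : z ⤳ y) :
    y ⤳ x ∨ x ⤳ y := by
  by_contra! ⟨hyx, hxy⟩
  obtain ⟨a, hxa, hya⟩ := exists_mem_notMem_of_not_specializes hyx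
  obtain ⟨b, hyb, hxb⟩ := exists_mem_notMem_of_not_specializes hxy
  obtain ⟨u, v, hau, hbv, huv⟩ := h a b
  have hzu : z ∈ u := hx.mem_open u.isOpen ((hau hxa).resolve_left hxb)
  have hzv : z ∈ v := hy.mem_open v.isOpen ((hbv hyb).resolve_left hya)
  have hzuv : z ∈ u ⊓ v := ⟨hzu, hzv⟩
  rw [huv] at hzuv
  exact hzuv

theorem specializes_total_iff_isCompletelyNormalLattice_compactOpens [QuasiSober X] :
    (∀ x y z : X, z ⤳ x → z ⤳ y → y ⤳ x ∨ x ⤳ y) ↔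
      IsCompletelyNormalLattice (CompactOpens X) :=
  ⟨isCompletelyNormalLattice_compactOpens_of_specializes,
    fun h _ _ _ ↦ specializes_total_of_isCompletelyNormalLattice h⟩

end CompletelyNormal

lemma isCompletelyNormalLattice_compactOpens_iff {X : Type*} [TopologicalSpace X]
    [QuasiSeparatedSpace X] :
    IsCompletelyNormalLattice (CompactOpens X) ↔
      ∀ a b : Set X, IsCompact a → IsOpen a → IsCompact b → IsOpen b →
        ∃ u v : Set X, IsCompact u ∧ IsOpen u ∧ IsCompact v ∧ IsOpen v ∧
          a ⊆ b ∪ u ∧ b ⊆ a ∪ v ∧ u ∩ v = ∅ := by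
  constructor
  · intro h a b hac hao hbc hbo
    obtain ⟨u, v, hau, hbv, huv⟩ := h ⟨⟨a, hac⟩, hao⟩ ⟨⟨b, hbc⟩, hbo⟩
    exact ⟨u, v, u.isCompact, u.isOpen, v.isCompact, v.isOpen, hau, hbv,
      congrArg SetLike.coe huv⟩
  · intro h a b
    obtain ⟨u, v, huc, huo, hvc, hvo, hau, hbv, huv⟩ :=
      h a b a.isCompact a.isOpen b.isCompact b.isOpen
    exact ⟨⟨⟨u, huc⟩, huo⟩, ⟨⟨v, hvc⟩, hvo⟩, hau, hbv, CompactOpens.ext huv⟩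

theorem stmt10_general {X : Type*} [TopologicalSpace X] [QuasiSober X]
    (hbasis : TopologicalSpace.IsTopologicalBasis
      {U : Set X | IsCompact U ∧ IsOpen U})
    (hinter : ∀ U V : Set X, IsCompact U → IsOpen U → IsCompact V → IsOpen V →
      IsCompact (U ∩ V)) :
    (∀ x y z : X, x ∈ closure {z} → y ∈ closure {z} →
        x ∈ closure {y} ∨ y ∈ closure {x}) ↔
    (∀ a b : Set X, IsCompact a → IsOpen a → IsCompact b → IsOpen b →
        ∃ u v : Set X, IsCompact u ∧ IsOpen u ∧ IsCompact v ∧ IsOpen v ∧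
          a ⊆ b ∪ u ∧ b ⊆ a ∪ v ∧ u ∩ v = ∅) := by
  have : PrespectralSpace X := .of_isTopologicalBasis hbasis fun _ hU ↦ hU.1
  have : QuasiSeparatedSpace X := ⟨fun U V hU hUc hV hVc ↦ hinter U V hUc hU hVc hV⟩
  simp only [← specializes_iff_mem_closure]
  rw [specializes_total_iff_isCompletelyNormalLattice_compactOpens,
    isCompletelyNormalLattice_compactOpens_iff]

/-- a generalized spectral space X (sober, with a basis of compact
open sets closed under binary intersection) is completely normal iff its lattice
of compact open subsets is completely normal as a distributive lattice. -/
theorem stmt10 {X : Type*} [TopologicalSpace X] [QuasiSober X] [T0Space X]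
    (hbasis : TopologicalSpace.IsTopologicalBasis
      {U : Set X | IsCompact U ∧ IsOpen U})
    (hinter : ∀ U V : Set X, IsCompact U → IsOpen U → IsCompact V → IsOpen V →
      IsCompact (U ∩ V)) :
    (∀ x y z : X, x ∈ closure {z} → y ∈ closure {z} →
        x ∈ closure {y} ∨ y ∈ closure {x}) ↔
    (∀ a b : Set X, IsCompact a → IsOpen a → IsCompact b → IsOpen b →
        ∃ u v : Set X, IsCompact u ∧ IsOpen u ∧ IsCompact v ∧ IsOpen v ∧
          a ⊆ b ∪ u ∧ b ⊆ a ∪ v ∧ u ∩ v = ∅) :=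
  stmt10_general hbasis hinter
end

section
/- Let G be an abelian lattice-ordered group, S a distributive lattice with zero, and φ : Idc G → S a closed surjective join-homomorphism. Then I := { x ∈ G : φ(⟨x⟩) = 0 } is an ℓ-ideal of G, and there is a unique isomorphism ψ : Idc(G/I) → S with ψ(⟨x + I⟩) = φ(⟨x⟩) for all x ∈ G⁺. -/
/-!
The kernel `I = {x | φ x = ⊥}` is an ℓ-ideal because `φ` is monotone for `|·|` and turns sums of
positive elements into joins. For the isomorphism, closedness applied with `b = ⊥` turns
`φ x ≤ φ y` into `x ≤ n • (y + |z|)` with `φ z = ⊥`; conversely `φ (y + z) = φ y ⊔ φ z = φ y`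
whenever `z ∈ I⁺`.
-/

section IdcHom

variable {G S : Type*} [Lattice G] [AddCommGroup G] [SemilatticeSup S] {φ : G → S}

lemma map_le_of_abs_le (hwd : ∀ x y : G, (∃ n : ℕ, |x| ≤ n • |y|) → φ x ≤ φ y)
    {x y : G} (h : |x| ≤ |y|) : φ x ≤ φ y :=
  hwd x y ⟨1, by rwa [one_smul]⟩

lemma map_add_of_nonneg [CovariantClass G G (· + ·) (· ≤ ·)]
    (hjoin : ∀ x y : G, φ (|x| + |y|) = φ x ⊔ φ y)
    {y z : G} (hy : 0 ≤ y) (hz : 0 ≤ z) : φ (y + z) = φ y ⊔ φ z := by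
  rw [← hjoin, abs_of_nonneg hy, abs_of_nonneg hz]

variable [OrderBot S]

lemma map_eq_bot_of_abs_le (hwd : ∀ x y : G, (∃ n : ℕ, |x| ≤ n • |y|) → φ x ≤ φ y)
    {x y : G} (h : |x| ≤ |y|) (hy : φ y = ⊥) : φ x = ⊥ :=
  le_bot_iff.mp (hy ▸ map_le_of_abs_le hwd h)

variable [CovariantClass G G (· + ·) (· ≤ ·)]

lemma map_sub_eq_bot (hwd : ∀ x y : G, (∃ n : ℕ, |x| ≤ n • |y|) → φ x ≤ φ y)
    (hjoin : ∀ x y : G, φ (|x| + |y|) = φ x ⊔ φ y)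
    {x y : G} (hx : φ x = ⊥) (hy : φ y = ⊥) : φ (x - y) = ⊥ := by
  have hsub : |x - y| ≤ |(|x| + |y|)| := by
    rw [abs_of_nonneg (add_nonneg (abs_nonneg x) (abs_nonneg y)), sub_eq_add_neg, ← abs_neg y]
    exact abs_add_le x (-y)
  exact map_eq_bot_of_abs_le hwd hsub (by rw [hjoin, hx, hy, sup_idem])

lemma exists_le_nsmul_add_of_map_le (hwd : ∀ x y : G, (∃ n : ℕ, |x| ≤ n • |y|) → φ x ≤ φ y)
    (hclosed : ∀ (a₀ a₁ : G) (b : S), φ a₀ ≤ φ a₁ ⊔ b →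
      ∃ x : G, (∃ n : ℕ, |a₀| ≤ n • (|a₁| + |x|)) ∧ φ x ≤ b)
    {x y : G} (hx : 0 ≤ x) (hy : 0 ≤ y) (h : φ x ≤ φ y) :
    ∃ (n : ℕ) (z : G), 0 ≤ z ∧ φ z = ⊥ ∧ x ≤ n • (y + z) := by
  obtain ⟨z, ⟨n, hn⟩, hz⟩ := hclosed x y ⊥ (by rwa [sup_bot_eq])
  refine ⟨n, |z|, abs_nonneg z, map_eq_bot_of_abs_le hwd (abs_abs z).le (le_bot_iff.mp hz), ?_⟩
  rwa [abs_of_nonneg hx, abs_of_nonneg hy] at hn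

lemma map_le_of_le_nsmul_add (hwd : ∀ x y : G, (∃ n : ℕ, |x| ≤ n • |y|) → φ x ≤ φ y)
    (hjoin : ∀ x y : G, φ (|x| + |y|) = φ x ⊔ φ y)
    {x y z : G} {n : ℕ} (hx : 0 ≤ x) (hy : 0 ≤ y) (hz : 0 ≤ z) (hφz : φ z = ⊥)
    (h : x ≤ n • (y + z)) : φ x ≤ φ y :=
  calc φ x ≤ φ (y + z) :=
        hwd x (y + z) ⟨n, by rwa [abs_of_nonneg hx, abs_of_nonneg (add_nonneg hy hz)]⟩
    _ = φ y := by rw [map_add_of_nonneg hjoin hy hz, hφz, sup_bot_eq]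

end IdcHom

theorem stmt11_general {G S : Type*} [Lattice G] [AddCommGroup G]
    [CovariantClass G G (· + ·) (· ≤ ·)]
    [DistribLattice S] [OrderBot S]
    (φ : G → S)
    (hwd : ∀ x y : G, (∃ n : ℕ, |x| ≤ n • |y|) → φ x ≤ φ y)
    (hjoin : ∀ x y : G, φ (|x| + |y|) = φ x ⊔ φ y)
    (hclosed : ∀ (a₀ a₁ : G) (b : S), φ a₀ ≤ φ a₁ ⊔ b →
      ∃ x : G, (∃ n : ℕ, |a₀| ≤ n • (|a₁| + |x|)) ∧ φ x ≤ b) :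
    -- I = { x : φ x = ⊥ } is an ℓ-ideal of G:
    ((∀ x y : G, φ x = ⊥ → φ y = ⊥ → φ (x - y) = ⊥) ∧
     (∀ x y : G, |x| ≤ |y| → φ y = ⊥ → φ x = ⊥)) ∧
    -- φ induces an isomorphism Idc (G/I) ≅ S:
    (∀ x y : G, 0 ≤ x → 0 ≤ y →
      (φ x ≤ φ y ↔ ∃ (n : ℕ) (z : G), 0 ≤ z ∧ φ z = ⊥ ∧ x ≤ n • (y + z))) :=
  ⟨⟨fun _ _ hx hy => map_sub_eq_bot hwd hjoin hx hy,
    fun _ _ h hy => map_eq_bot_of_abs_le hwd h hy⟩,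
   fun _ _ hx hy => ⟨exists_le_nsmul_add_of_map_le hwd hclosed hx hy,
    fun ⟨_, _, hz, hφz, h⟩ => map_le_of_le_nsmul_add hwd hjoin hx hy hz hφz h⟩⟩

/-- factorization of a closed surjective join-homomorphism
φ : Idc G → S through an isomorphism Idc (G/I) ≅ S, where
I = { x : φ⟨x⟩ = 0 }.  The lattice Idc G of principal ℓ-ideals is modelled at
the level of elements of G: the ideal ⟨x⟩ is represented by x, containment
⟨x⟩ ⊆ ⟨y⟩ by ∃ n, |x| ≤ n • |y|, and φ is a map G → S constant on
ideal-equivalence classes.  The conclusion states that I is an ℓ-ideal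
(a convex subgroup) and that φ induces an order-isomorphism
Idc (G/I) ≅ S, i.e. for x, y ∈ G⁺ : φ x ≤ φ y iff ⟨x + I⟩ ⊆ ⟨y + I⟩
(the latter meaning ∃ n ∃ z ∈ I⁺, x ≤ n • (y + z)); together with the
surjectivity of φ this yields the unique isomorphism ψ. -/
theorem stmt11 {G S : Type*} [Lattice G] [AddCommGroup G]
    [CovariantClass G G (· + ·) (· ≤ ·)]
    [DistribLattice S] [OrderBot S]
    (φ : G → S)
    (hwd : ∀ x y : G, (∃ n : ℕ, |x| ≤ n • |y|) → φ x ≤ φ y)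
    (hjoin : ∀ x y : G, φ (|x| + |y|) = φ x ⊔ φ y)
    (hzero : φ 0 = ⊥)
    (hsurj : Function.Surjective φ)
    (hclosed : ∀ (a₀ a₁ : G) (b : S), φ a₀ ≤ φ a₁ ⊔ b →
      ∃ x : G, (∃ n : ℕ, |a₀| ≤ n • (|a₁| + |x|)) ∧ φ x ≤ b) :
    -- I = { x : φ x = ⊥ } is an ℓ-ideal of G:
    ((∀ x y : G, φ x = ⊥ → φ y = ⊥ → φ (x - y) = ⊥) ∧
     (∀ x y : G, |x| ≤ |y| → φ y = ⊥ → φ x = ⊥)) ∧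
    -- φ induces an isomorphism Idc (G/I) ≅ S:
    (∀ x y : G, 0 ≤ x → 0 ≤ y →
      (φ x ≤ φ y ↔ ∃ (n : ℕ) (z : G), 0 ≤ z ∧ φ z = ⊥ ∧ x ≤ n • (y + z))) :=
  stmt11_general φ hwd hjoin hclosed
end

section
/- Let G and H be abelian lattice-ordered groups and f : G → H an ℓ-homomorphism. Then the induced map Idc f : Idc G → Idc H, sending ⟨x⟩_G to ⟨f(x)⟩_H, is a well-defined 0-lattice homomorphism which is closed: if (Idc f)(a₀) ≤ (Idc f)(a₁) ∨ b then there exists x ∈ Idc G with a₀ ≤ a₁ ∨ x and (Idc f)(x) ≤ b. -/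
/-!
An ℓ-homomorphism commutes with `|·|` and with positive parts, so `Idc f` is monotone. For
closedness, if `|f a₀| ≤ n • (|f a₁| + |b|)`, take `x := (|a₀| - N • |a₁|)⁺` with `N = n + 1`
(so that `x ≤ N • x`): then `|a₀| ≤ N • |a₁| + x ≤ N • (|a₁| + x)`, while
`f x = (f |a₀| - N • f |a₁|)⁺ ≤ N • |b|`.
-/

lemma monotone_of_map_sup {α β : Type*} [SemilatticeSup α] [SemilatticeSup β] {f : α → β}
    (hf : ∀ x y, f (x ⊔ y) = f x ⊔ f y) : Monotone f :=
  OrderHomClass.mono (SupHom.mk f hf)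

lemma le_nsmul_add_posPart_sub {G : Type*} [Lattice G] [AddCommGroup G] [AddLeftMono G]
    (a b : G) {N : ℕ} (hN : N ≠ 0) : a ≤ N • (b + (a - N • b)⁺) :=
  calc a ≤ N • b + (a - N • b)⁺ := sub_le_iff_le_add'.1 (le_posPart _)
    _ ≤ N • b + N • (a - N • b)⁺ := by gcongr; exact le_self_nsmul (posPart_nonneg _) hN
    _ = N • (b + (a - N • b)⁺) := (nsmul_add _ _ _).symm

namespace AddMonoidHom

variable {G H : Type*} [Lattice G] [AddCommGroup G] [Lattice H] [AddCommGroup H]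

lemma map_inf_of_map_sup [AddLeftMono G] [AddLeftMono H] (f : G →+ H)
    (hf : ∀ x y, f (x ⊔ y) = f x ⊔ f y) (x y : G) : f (x ⊓ y) = f x ⊓ f y := by
  rw [← neg_neg (x ⊓ y), neg_inf, map_neg, hf, map_neg, map_neg, neg_sup, neg_neg, neg_neg]

lemma map_abs_of_map_sup (f : G →+ H) (hf : ∀ x y, f (x ⊔ y) = f x ⊔ f y) (x : G) :
    f |x| = |f x| := by
  rw [abs, abs, hf, map_neg]

lemma map_posPart_of_map_sup (f : G →+ H) (hf : ∀ x y, f (x ⊔ y) = f x ⊔ f y) (x : G) :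
    f x⁺ = (f x)⁺ := by
  rw [posPart_def, posPart_def, hf, map_zero]

lemma abs_map_le_nsmul_abs_map (f : G →+ H) (hf : ∀ x y, f (x ⊔ y) = f x ⊔ f y) {x y : G}
    {n : ℕ} (h : |x| ≤ n • |y|) : |f x| ≤ n • |f y| := by
  rw [← map_abs_of_map_sup f hf, ← map_abs_of_map_sup f hf, ← map_nsmul]
  exact monotone_of_map_sup hf h

lemma exists_abs_le_nsmul_add_of_abs_map_le [AddLeftMono G] [AddLeftMono H] (f : G →+ H)
    (hf : ∀ x y, f (x ⊔ y) = f x ⊔ f y) {a₀ a₁ : G} {b : H} {n : ℕ}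
    (h : |f a₀| ≤ n • (|f a₁| + |b|)) :
    ∃ x : G, (∃ n : ℕ, |a₀| ≤ n • (|a₁| + |x|)) ∧ ∃ n : ℕ, |f x| ≤ n • |b| := by
  set N := n + 1
  have hN : |f a₀| ≤ N • (|f a₁| + |b|) :=
    h.trans (nsmul_le_nsmul_left (by positivity) n.le_succ)
  refine ⟨(|a₀| - N • |a₁|)⁺, ⟨N, ?_⟩, ⟨N, ?_⟩⟩
  · rw [abs_of_nonneg (posPart_nonneg _)]
    exact le_nsmul_add_posPart_sub _ _ n.succ_ne_zero
  · rw [← map_abs_of_map_sup f hf, abs_of_nonneg (posPart_nonneg _), map_posPart_of_map_sup f hf,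
      map_sub, map_nsmul, map_abs_of_map_sup f hf, map_abs_of_map_sup f hf]
    refine sup_le ?_ (nsmul_nonneg (abs_nonneg _) _)
    rwa [sub_le_iff_le_add', ← nsmul_add]

end AddMonoidHom

/-- for an ℓ-homomorphism f : G → H of abelian ℓ-groups, the
induced map Idc f : Idc G → Idc H, ⟨x⟩ ↦ ⟨f x⟩, is a well-defined 0-lattice
homomorphism which is closed.  Principal ℓ-ideals are modelled at the element
level: ⟨x⟩ ⊆ ⟨y⟩ iff ∃ n, |x| ≤ n • |y|; since joins and meets of principal
ideals are given by ⟨|x| + |y|⟩ and ⟨|x| ⊓ |y|⟩ and f preserves +, ⊔ and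
(as proved in the first conclusion) ⊓, well-definedness/monotonicity and the
closedness condition capture the statement. -/
theorem stmt12 {G H : Type*} [Lattice G] [AddCommGroup G]
    [CovariantClass G G (· + ·) (· ≤ ·)]
    [Lattice H] [AddCommGroup H] [CovariantClass H H (· + ·) (· ≤ ·)]
    (f : G →+ H) (hfsup : ∀ x y : G, f (x ⊔ y) = f x ⊔ f y) :
    -- f is a lattice homomorphism (meets are preserved as well):
    (∀ x y : G, f (x ⊓ y) = f x ⊓ f y) ∧
    -- Idc f is well defined and monotone (hence a 0-lattice homomorphism):
    (∀ x y : G, (∃ n : ℕ, |x| ≤ n • |y|) → ∃ n : ℕ, |f x| ≤ n • |f y|) ∧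
    -- Idc f is closed:
    (∀ (a₀ a₁ : G) (b : H),
      (∃ n : ℕ, |f a₀| ≤ n • (|f a₁| + |b|)) →
      ∃ x : G, (∃ n : ℕ, |a₀| ≤ n • (|a₁| + |x|)) ∧
        ∃ n : ℕ, |f x| ≤ n • |b|) :=
  ⟨f.map_inf_of_map_sup hfsup,
    fun _ _ ⟨n, h⟩ => ⟨n, f.abs_map_le_nsmul_abs_map hfsup h⟩,
    fun _ _ _ ⟨_, h⟩ => f.exists_abs_le_nsmul_add_of_abs_map_le hfsup h⟩
end

section
/- Let F be a finite union of closed linear subspaces of a real topological vector space E, and let Q be a convex subset of E. Then either Q ⊆ F, or Q ∩ F is nowhere dense in Q (with the subspace topology on Q). -/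
/-!
Fix `x ∈ Q` outside `F`. For `q ∈ Q` the segment `t ↦ q + t • (x - q)`, `t ∈ [0, 1]`, lies in `Q`,
and it meets each subspace `p i` in at most one point, since otherwise it would contain the whole
line through `q` and `x`, hence `x`. So for all but finitely many `t` the segment avoids `F`, and
letting `t → 0⁺` shows that `q` is a limit of points of `Q \ F`. Thus `Q \ F` is dense in `Q`, and
as `F` is closed, `Q ∩ F` is nowhere dense in `Q`.
-/

open Set Filter Topology AffineMap

section LineMap

variable {K V : Type*} [Field K] [AddCommGroup V] [Module K V]

theorem Submodule.subsingleton_setOf_lineMap_mem (p : Submodule K V) {q x : V} (hx : x ∉ p) :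
    {t : K | lineMap q x t ∈ p}.Subsingleton := by
  intro s hs t ht
  by_contra hst
  simp only [mem_ofPred_eq, lineMap_apply_module'] at hs ht
  have hxq : x - q ∈ p := by
    have hdiff := p.smul_mem (s - t)⁻¹ (p.sub_mem hs ht)
    rwa [add_sub_add_right_eq_sub, ← sub_smul, smul_smul, inv_mul_cancel₀ (sub_ne_zero.mpr hst),
      one_smul] at hdiff
  have hq : q ∈ p := by simpa using p.sub_mem hs (p.smul_mem s hxq)
  exact hx (by simpa using p.add_mem hxq hq)

theorem finite_setOf_lineMap_mem_iUnion_submodule {ι : Type*} [Finite ι] (p : ι → Submodule K V)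
    {q x : V} (hx : x ∉ ⋃ i, (p i : Set V)) :
    {t : K | lineMap q x t ∈ ⋃ i, (p i : Set V)}.Finite := by
  simp only [mem_iUnion, ofPred_exists]
  exact finite_iUnion fun i ↦
    ((p i).subsingleton_setOf_lineMap_mem fun hxi ↦ hx (mem_iUnion_of_mem i hxi)).finite

end LineMap

theorem Convex.subset_closure_diff_iUnion_submodule {E : Type*} [AddCommGroup E] [Module ℝ E]
    [TopologicalSpace E] [IsTopologicalAddGroup E] [ContinuousSMul ℝ E]
    {ι : Type*} [Finite ι] (p : ι → Submodule ℝ E) {Q : Set E} (hQ : Convex ℝ Q) {x : E}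
    (hxQ : x ∈ Q) (hxF : x ∉ ⋃ i, (p i : Set E)) :
    Q ⊆ closure (Q \ ⋃ i, (p i : Set E)) := by
  intro q hq
  have hlim : Tendsto (lineMap q x) (𝓝[>] (0 : ℝ)) (𝓝 q) :=
    (lineMap_continuous.tendsto' 0 q (lineMap_apply_zero q x)).mono_left nhdsWithin_le_nhds
  have hmemQ : ∀ᶠ t in 𝓝[>] (0 : ℝ), lineMap q x t ∈ Q := by
    filter_upwards [Ioo_mem_nhdsGT one_pos] with t ht
    exact hQ.lineMap_mem hq hxQ (Ioo_subset_Icc_self ht)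
  have hnotF : ∀ᶠ t in 𝓝[>] (0 : ℝ), lineMap q x t ∉ ⋃ i, (p i : Set E) :=
    ((nhdsGT_le_nhdsNE 0).trans (nhdsNE_le_cofinite 0))
      (finite_setOf_lineMap_mem_iUnion_submodule p hxF).eventually_cofinite_notMem
  exact mem_closure_of_tendsto hlim (hmemQ.and hnotF)

/-- if F is a finite union of closed linear subspaces of a real
topological vector space E and Q is convex, then either Q ⊆ F or Q ∩ F is
nowhere dense in Q (with the subspace topology on Q). -/
theorem stmt14 {E : Type*} [AddCommGroup E] [Module ℝ E] [TopologicalSpace E]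
    [IsTopologicalAddGroup E] [ContinuousSMul ℝ E]
    {ι : Type*} [Finite ι] (p : ι → Submodule ℝ E)
    (hp : ∀ i, IsClosed ((p i : Set E)))
    (Q : Set E) (hQ : Convex ℝ Q) :
    Q ⊆ (⋃ i, (p i : Set E)) ∨
      interior (closure ((Subtype.val ⁻¹' ⋃ i, (p i : Set E)) : Set Q)) = ∅ := by
  rw [or_iff_not_imp_left, not_subset]
  rintro ⟨x, hxQ, hxF⟩
  have hclosed : IsClosed (⋃ i, (p i : Set E)) := isClosed_iUnion_of_finite hp
  rw [(hclosed.preimage continuous_subtype_val).closure_eq, interior_eq_empty_iff_dense_compl,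
    Subtype.dense_iff, ← preimage_compl, Subtype.image_preimage_coe, ← sdiff_eq]
  exact hQ.subset_closure_diff_iUnion_submodule p hxQ hxF
end

section
/- Let D be a bounded distributive lattice and let D ∗ J₂ denote the sublattice of D³ of all triples (x, y, z) with z ≤ x and z ≤ y. Let E be a bounded distributive lattice and a, b ∈ E with a ∧ b = 0. Then for every 0,1-lattice homomorphism f : D → E, there is a unique 0,1-lattice homomorphism g : D ∗ J₂ → E with g(1,0,0) = a, g(0,1,0) = b, and g(x,x,x) = f(x) for all x ∈ D; it is given by g(x,y,z) = (f(x) ∧ a) ∨ (f(y) ∧ b) ∨ f(z). -/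
/-!
Every element `(x, y, z)` of `D ∗ J₂` equals
`((x, x, x) ⊓ (⊤, ⊥, ⊥)) ⊔ ((y, y, y) ⊓ (⊥, ⊤, ⊥)) ⊔ (z, z, z)`, so the conditions on `g` force
`g (x, y, z) = (f x ⊓ a) ⊔ (f y ⊓ b) ⊔ f z`. Conversely, this formula preserves joins by
distributivity. For meets, `a ⊓ b = ⊥` and `z ≤ x`, `z ≤ y` give `g t ⊓ a = f x ⊓ a` and
`g t ⊓ b = f y ⊓ b`; expanding `g s ⊓ g t` along the three joinands of `g t` leaves only
`g s ⊓ f z'` to bound, and it lies below `g (s ⊓ t)` because `z' ≤ x'` and `z' ≤ y'`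
for `t = (x', y', z')`.
-/

def Sublattice.freeProdJ2 (D : Type*) [Lattice D] : Sublattice (D × D × D) where
  carrier := {t | t.2.2 ≤ t.1 ∧ t.2.2 ≤ t.2.1}
  supClosed' _ hs _ ht := ⟨sup_le_sup hs.1 ht.1, sup_le_sup hs.2 ht.2⟩
  infClosed' _ hs _ ht := ⟨inf_le_inf hs.1 ht.1, inf_le_inf hs.2 ht.2⟩

namespace Sublattice.freeProdJ2

variable {D E : Type*} [Lattice D]

def diag (x : D) : freeProdJ2 D := ⟨(x, x, x), le_rfl, le_rfl⟩

section Lattice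

variable [Lattice E] {f : D → E} {a b : E}

def lift (f : D → E) (a b : E) (t : freeProdJ2 D) : E :=
  (f t.1.1 ⊓ a) ⊔ (f t.1.2.1 ⊓ b) ⊔ f t.1.2.2

theorem lift_mono (hf : Monotone f) : Monotone (lift f a b) := fun _ _ h =>
  sup_le_sup (sup_le_sup (inf_le_inf_right a (hf h.1)) (inf_le_inf_right b (hf h.2.1))) (hf h.2.2)

variable [BoundedOrder D]

def left : freeProdJ2 D := ⟨(⊤, ⊥, ⊥), bot_le, bot_le⟩

def right : freeProdJ2 D := ⟨(⊥, ⊤, ⊥), bot_le, bot_le⟩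

theorem eq_diag_inf_left_sup_diag_inf_right_sup_diag (t : freeProdJ2 D) :
    t = (diag t.1.1 ⊓ left) ⊔ (diag t.1.2.1 ⊓ right) ⊔ diag t.1.2.2 := by
  obtain ⟨⟨x, y, z⟩, hzx, hzy⟩ := t
  ext <;> simp [diag, left, right, hzx, hzy]

def IsLift (f : D → E) (a b : E) (g : freeProdJ2 D → E) : Prop :=
  g left = a ∧ g right = b ∧ (∀ x, g (diag x) = f x) ∧
    (∀ s t, g (s ⊔ t) = g s ⊔ g t) ∧ (∀ s t, g (s ⊓ t) = g s ⊓ g t)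

theorem IsLift.eq_lift {g : freeProdJ2 D → E} (hg : IsLift f a b g)
    (t : freeProdJ2 D) : g t = lift f a b t := by
  obtain ⟨hleft, hright, hdiag, hsup, hinf⟩ := hg
  conv_lhs => rw [eq_diag_inf_left_sup_diag_inf_right_sup_diag t]
  rw [hsup, hsup, hinf, hinf, hdiag, hdiag, hdiag, hleft, hright, lift]

end Lattice

variable [DistribLattice E] {f : D → E} {a b : E}

theorem lift_sup (hf : ∀ x y, f (x ⊔ y) = f x ⊔ f y) (s t : freeProdJ2 D) :
    lift f a b (s ⊔ t) = lift f a b s ⊔ lift f a b t := by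
  simp only [lift, Sublattice.coe_sup, Prod.fst_sup, Prod.snd_sup, hf, inf_sup_right]
  ac_rfl

section OrderBot

variable [OrderBot E]

theorem lift_inf_left (hf : Monotone f) (hab : Disjoint a b) (t : freeProdJ2 D) :
    lift f a b t ⊓ a = f t.1.1 ⊓ a := by
  have hza : f t.1.2.2 ⊓ a ≤ f t.1.1 ⊓ a := inf_le_inf_right a (hf t.2.1)
  simp only [lift, inf_sup_right, inf_assoc, inf_idem, hab.symm.eq_bot, inf_bot_eq, sup_bot_eq,
    sup_eq_left.2 hza]

theorem lift_inf_right (hf : Monotone f) (hab : Disjoint a b) (t : freeProdJ2 D) :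
    lift f a b t ⊓ b = f t.1.2.1 ⊓ b := by
  have hzb : f t.1.2.2 ⊓ b ≤ f t.1.2.1 ⊓ b := inf_le_inf_right b (hf t.2.2)
  simp only [lift, inf_sup_right, inf_assoc, inf_idem, hab.eq_bot, inf_bot_eq, bot_sup_eq,
    sup_eq_left.2 hzb]

theorem lift_inf (hf : ∀ x y, f (x ⊓ y) = f x ⊓ f y) (hab : Disjoint a b)
    (s t : freeProdJ2 D) : lift f a b (s ⊓ t) = lift f a b s ⊓ lift f a b t := by
  have hmono : Monotone f := Monotone.of_map_inf hf
  refine le_antisymm (le_inf (lift_mono hmono inf_le_left) (lift_mono hmono inf_le_right)) ?_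
  set u := lift f a b s
  have hu_z : u ⊓ f t.1.2.2 ≤
      (f s.1.1 ⊓ a ⊓ f t.1.1) ⊔ (f s.1.2.1 ⊓ b ⊓ f t.1.2.1) ⊔ (f s.1.2.2 ⊓ f t.1.2.2) := by
    simp only [u, lift, inf_sup_right]
    gcongr
    exacts [hmono t.2.1, hmono t.2.2]
  calc u ⊓ lift f a b t
      = (u ⊓ a ⊓ f t.1.1) ⊔ (u ⊓ b ⊓ f t.1.2.1) ⊔ (u ⊓ f t.1.2.2) := by
        simp only [lift, inf_sup_left]; ac_rfl
    _ = (f s.1.1 ⊓ a ⊓ f t.1.1) ⊔ (f s.1.2.1 ⊓ b ⊓ f t.1.2.1) ⊔ (u ⊓ f t.1.2.2) := by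
        rw [lift_inf_left hmono hab, lift_inf_right hmono hab]
    _ ≤ (f s.1.1 ⊓ a ⊓ f t.1.1) ⊔ (f s.1.2.1 ⊓ b ⊓ f t.1.2.1) ⊔ (f s.1.2.2 ⊓ f t.1.2.2) :=
        sup_le le_sup_left hu_z
    _ = lift f a b (s ⊓ t) := by
        simp only [lift, Sublattice.coe_inf, Prod.fst_inf, Prod.snd_inf, hf]; ac_rfl

end OrderBot

theorem isLift_lift [BoundedOrder D] [BoundedOrder E] (hfsup : ∀ x y, f (x ⊔ y) = f x ⊔ f y)
    (hfinf : ∀ x y, f (x ⊓ y) = f x ⊓ f y) (hfbot : f ⊥ = ⊥) (hftop : f ⊤ = ⊤)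
    (hab : Disjoint a b) : IsLift f a b (lift f a b) :=
  ⟨by simp [lift, left, hfbot, hftop], by simp [lift, right, hfbot, hftop],
    fun x => sup_eq_right.2 (sup_le inf_le_left inf_le_left), lift_sup hfsup, lift_inf hfinf hab⟩

end Sublattice.freeProdJ2

/-- free distributive product with J₂.  D ∗ J₂ is the sublattice
of D³ of triples (x, y, z) with z ≤ x and z ≤ y (componentwise order).  For a
0,1-lattice homomorphism f : D → E and a, b ∈ E with a ⊓ b = 0, there is a
unique 0,1-lattice homomorphism g : D ∗ J₂ → E with g(1,0,0) = a,
g(0,1,0) = b and g(x,x,x) = f x; it is given by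
g(x,y,z) = (f x ⊓ a) ⊔ (f y ⊓ b) ⊔ f z. -/
theorem stmt15 {D E : Type*} [DistribLattice D] [BoundedOrder D]
    [DistribLattice E] [BoundedOrder E]
    (f : D → E)
    (hfsup : ∀ x y : D, f (x ⊔ y) = f x ⊔ f y)
    (hfinf : ∀ x y : D, f (x ⊓ y) = f x ⊓ f y)
    (hfbot : f ⊥ = ⊥) (hftop : f ⊤ = ⊤)
    (a b : E) (hab : a ⊓ b = ⊥) :
    let J2 := {t : D × D × D // t.2.2 ≤ t.1 ∧ t.2.2 ≤ t.2.1}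
    let Cond : (J2 → E) → Prop := fun g =>
      g ⟨(⊤, ⊥, ⊥), ⟨bot_le, bot_le⟩⟩ = a ∧
      g ⟨(⊥, ⊤, ⊥), ⟨bot_le, bot_le⟩⟩ = b ∧
      (∀ x : D, g ⟨(x, x, x), ⟨le_rfl, le_rfl⟩⟩ = f x) ∧
      (∀ s t : J2,
        g ⟨(s.1.1 ⊔ t.1.1, s.1.2.1 ⊔ t.1.2.1, s.1.2.2 ⊔ t.1.2.2),
            ⟨sup_le_sup s.2.1 t.2.1, sup_le_sup s.2.2 t.2.2⟩⟩ = g s ⊔ g t) ∧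
      (∀ s t : J2,
        g ⟨(s.1.1 ⊓ t.1.1, s.1.2.1 ⊓ t.1.2.1, s.1.2.2 ⊓ t.1.2.2),
            ⟨inf_le_inf s.2.1 t.2.1, inf_le_inf s.2.2 t.2.2⟩⟩ = g s ⊓ g t)
    (∃! g : J2 → E, Cond g) ∧
      ∀ g : J2 → E, Cond g →
        ∀ t : J2, g t = (f t.1.1 ⊓ a) ⊔ (f t.1.2.1 ⊓ b) ⊔ f t.1.2.2 := by
  intro J2 Cond
  have hformula (g : J2 → E) (hg : Cond g) (t : J2) :
      g t = (f t.1.1 ⊓ a) ⊔ (f t.1.2.1 ⊓ b) ⊔ f t.1.2.2 :=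
    Sublattice.freeProdJ2.IsLift.eq_lift hg t
  have hlift : Cond (Sublattice.freeProdJ2.lift f a b) :=
    Sublattice.freeProdJ2.isLift_lift hfsup hfinf hfbot hftop (disjoint_iff.2 hab)
  exact ⟨⟨_, hlift, fun g hg => funext (hformula g hg)⟩, hformula⟩
end

section
/- Let D be a distributive lattice with zero that is not a generalized dual Heyting algebra. Then the lattice Dᵒᵐᵉᵍᵃ (the countably infinite power of D with componentwise operations) does not have countably based differences; in particular, there exist elements a, b ∈ D such that for every descending sequence (eₙ) in Dᵒᵐᵉᵍᵃ cofinal in the filter { x : ε(a) ≤ ε(b) ∨ x } (where ε is the diagonal embedding), a contradiction arises; hence Dᵒᵐᵉᵍᵃ is not isomorphic to Idc G for any abelian ℓ-group G. -/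
/-!
Diagonalisation: if `a ⊖ b` has no least element in `D`, then for any countable family `cₙ` in
`a ⊖ b` inside `Dᵒᵐᵉᵍᵃ` one picks, coordinatewise, `xₙ ∈ a ⊖ b` with `cₙ(n) ≰ xₙ`; the sequence
`(xₙ)` lies in `ε a ⊖ ε b` but above no `cₙ`. On the other hand, in `Idc G` the difference
`⟨g⟩ ⊖ ⟨h⟩` is generated by the principal ideals of `(|g| - n|h|)⁺`, so `Idc G` has countably
based differences.
-/

open Function

/-- `c` generates the filter `a ⊖ b = {x | a ≤ b ⊔ x}`. -/
def IsDiffBasis {ι L : Type*} [Lattice L] (a b : L) (c : ι → L) : Prop :=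
  (∀ n, a ≤ b ⊔ c n) ∧ ∀ x, a ≤ b ⊔ x → ∃ n, c n ≤ x

theorem not_isDiffBasis_pi_const {ι D : Type*} [Lattice D] {a b : D}
    (hab : ∀ m, a ≤ b ⊔ m → ∃ x, a ≤ b ⊔ x ∧ ¬ m ≤ x) (c : ι → ι → D) :
    ¬ IsDiffBasis (const ι a) (const ι b) c := by
  rintro ⟨hc_mem, hc_cofinal⟩
  choose x hx_mem hx_not using fun n => hab (c n n) (hc_mem n n)
  obtain ⟨n, hn⟩ := hc_cofinal x hx_mem
  exact hx_not n (hn n)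

section LatticeOrderedGroup

variable {G : Type*} [Lattice G] [AddCommGroup G] [AddLeftMono G]

theorem abs_le_succ_nsmul_sup_posPart_sub (g h : G) (n : ℕ) :
    |g| ≤ (n + 1) • (|h| ⊔ (|g| - n • |h|)⁺) :=
  calc |g| = n • |h| + (|g| - n • |h|) := by abel
    _ ≤ n • |h| + (|g| - n • |h|)⁺ := add_le_add_right (le_posPart _) _
    _ ≤ n • (|h| ⊔ (|g| - n • |h|)⁺) + (|h| ⊔ (|g| - n • |h|)⁺) :=
      add_le_add (nsmul_le_nsmul_right le_sup_left n) le_sup_right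
    _ = (n + 1) • (|h| ⊔ (|g| - n • |h|)⁺) := (succ_nsmul _ n).symm

theorem posPart_sub_nsmul_le_of_abs_le {g h z : G} {n : ℕ} (hg : |g| ≤ n • (|h| ⊔ |z|)) :
    (|g| - n • |h|)⁺ ≤ n • |z| := by
  have hsup : |h| ⊔ |z| ≤ |h| + |z| :=
    sup_le (le_add_of_nonneg_right (abs_nonneg z)) (le_add_of_nonneg_left (abs_nonneg h))
  have hg' : |g| ≤ n • |h| + n • |z| :=
    calc |g| ≤ n • (|h| ⊔ |z|) := hg
      _ ≤ n • (|h| + |z|) := nsmul_le_nsmul_right hsup n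
      _ = n • |h| + n • |z| := smul_add n _ _
  rw [posPart_def]
  exact sup_le (sub_le_iff_le_add'.mpr hg') (nsmul_nonneg (abs_nonneg z) n)

theorem abs_abs_sup_abs (x y : G) : |(|x| ⊔ |y|)| = |x| ⊔ |y| :=
  abs_of_nonneg ((abs_nonneg x).trans le_sup_left)

variable {L : Type*} [Lattice L] {e : G → L}
  (he : ∀ x y, e x ≤ e y ↔ ∃ n : ℕ, |x| ≤ n • |y|)
include he

theorem map_le_map_sup_abs_left (x y : G) : e x ≤ e (|x| ⊔ |y|) :=
  (he _ _).mpr ⟨1, by rw [abs_abs_sup_abs, one_smul]; exact le_sup_left⟩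

theorem map_le_map_sup_abs_right (x y : G) : e y ≤ e (|x| ⊔ |y|) :=
  (he _ _).mpr ⟨1, by rw [abs_abs_sup_abs, one_smul]; exact le_sup_right⟩

theorem map_sup_abs (hsurj : Surjective e) (x y : G) : e (|x| ⊔ |y|) = e x ⊔ e y := by
  refine le_antisymm ?_ (sup_le (map_le_map_sup_abs_left he x y) (map_le_map_sup_abs_right he x y))
  obtain ⟨z, hz⟩ := hsurj (e x ⊔ e y)
  obtain ⟨n₁, hn₁⟩ := (he x z).mp (hz ▸ le_sup_left)
  obtain ⟨n₂, hn₂⟩ := (he y z).mp (hz ▸ le_sup_right)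
  have hle : |x| ⊔ |y| ≤ (n₁ + n₂) • |z| :=
    sup_le (hn₁.trans (nsmul_le_nsmul_left (abs_nonneg z) (Nat.le_add_right n₁ n₂)))
      (hn₂.trans (nsmul_le_nsmul_left (abs_nonneg z) (Nat.le_add_left n₂ n₁)))
  rw [← hz]
  exact (he _ z).mpr ⟨n₁ + n₂, by rwa [abs_abs_sup_abs]⟩

theorem isDiffBasis_map_posPart_sub_nsmul (hsurj : Surjective e) (g h : G) :
    IsDiffBasis (e g) (e h) fun n : ℕ => e (|g| - n • |h|)⁺ := by
  refine ⟨fun n => ?_, fun x hx => ?_⟩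
  · rw [← map_sup_abs he hsurj, abs_of_nonneg (posPart_nonneg _)]
    exact (he _ _).mpr ⟨n + 1, by
      rw [abs_of_nonneg ((posPart_nonneg _).trans le_sup_right)]
      exact abs_le_succ_nsmul_sup_posPart_sub g h n⟩
  · obtain ⟨z, rfl⟩ := hsurj x
    rw [← map_sup_abs he hsurj] at hx
    obtain ⟨n, hn⟩ := (he _ _).mp hx
    rw [abs_abs_sup_abs] at hn
    exact ⟨n, (he _ _).mpr ⟨n, by
      rw [abs_of_nonneg (posPart_nonneg _)]
      exact posPart_sub_nsmul_le_of_abs_le hn⟩⟩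

theorem exists_isDiffBasis_of_surjective (hsurj : Surjective e) (a b : L) :
    ∃ c : ℕ → L, IsDiffBasis a b c := by
  obtain ⟨g, rfl⟩ := hsurj a
  obtain ⟨h, rfl⟩ := hsurj b
  exact ⟨_, isDiffBasis_map_posPart_sub_nsmul he hsurj g h⟩

end LatticeOrderedGroup

theorem stmt16_general {D : Type*} [DistribLattice D]
    (hnot : ¬ ∀ a b : D, ∃ m : D, a ≤ b ⊔ m ∧ ∀ x : D, a ≤ b ⊔ x → m ≤ x) :
    (∃ a b : D, ¬ ∃ c : ℕ → (ℕ → D),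
      (∀ n : ℕ, (fun _ => a : ℕ → D) ≤ (fun _ => b : ℕ → D) ⊔ c n) ∧
      (∀ x : ℕ → D, (fun _ => a : ℕ → D) ≤ (fun _ => b : ℕ → D) ⊔ x →
        ∃ n : ℕ, c n ≤ x)) ∧
    (∀ (G : Type) [Lattice G] [AddCommGroup G]
        [CovariantClass G G (· + ·) (· ≤ ·)],
      ∀ e : G → (ℕ → D),
        ¬ (Function.Surjective e ∧
           ∀ x y : G, (∃ n : ℕ, |x| ≤ n • |y|) ↔ e x ≤ e y)) := by
  push Not at hnot
  obtain ⟨a, b, hab⟩ := hnot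
  refine ⟨⟨a, b, fun ⟨c, hc⟩ => not_isDiffBasis_pi_const hab c hc⟩, ?_⟩
  rintro G _ _ _ e ⟨hsurj, he⟩
  obtain ⟨c, hc⟩ :=
    exists_isDiffBasis_of_surjective (fun x y => (he x y).symm) hsurj (const ℕ a) (const ℕ b)
  exact not_isDiffBasis_pi_const hab c hc

/-- if a distributive lattice D with zero is not a generalized
dual Heyting algebra, then D^ω (the countable power with componentwise
operations) does not have countably based differences: there are a, b ∈ D
such that the filter { x : ε a ≤ ε b ⊔ x } (ε the diagonal embedding) has no
countable cofinal (generating) family; consequently D^ω is not isomorphic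
(as a poset, equivalently as a lattice) to Idc G for any abelian ℓ-group G,
where ⟨x⟩ ⊆ ⟨y⟩ in Idc G is rendered by ∃ n, |x| ≤ n • |y|. -/
theorem stmt16 {D : Type*} [DistribLattice D] [OrderBot D]
    (hnot : ¬ ∀ a b : D, ∃ m : D, a ≤ b ⊔ m ∧ ∀ x : D, a ≤ b ⊔ x → m ≤ x) :
    (∃ a b : D, ¬ ∃ c : ℕ → (ℕ → D),
      (∀ n : ℕ, (fun _ => a : ℕ → D) ≤ (fun _ => b : ℕ → D) ⊔ c n) ∧
      (∀ x : ℕ → D, (fun _ => a : ℕ → D) ≤ (fun _ => b : ℕ → D) ⊔ x →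
        ∃ n : ℕ, c n ≤ x)) ∧
    (∀ (G : Type) [Lattice G] [AddCommGroup G]
        [CovariantClass G G (· + ·) (· ≤ ·)],
      ∀ e : G → (ℕ → D),
        ¬ (Function.Surjective e ∧
           ∀ x y : G, (∃ n : ℕ, |x| ≤ n • |y|) ↔ e x ≤ e y)) :=
  stmt16_general hnot
end

section
/- For every abelian lattice-ordered group G and all a, b ∈ G⁺, the filter { x ∈ G⁺ : ⟨a⟩ ⊆ ⟨b⟩ ∨ ⟨x⟩ } of principal ℓ-ideals is countably generated; that is, the lattice Idc G of principal ℓ-ideals of G has countably based differences. -/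
/-! The filter is generated by the elements `(a - n • b)⁺`, `n ∈ ℕ`: on the one hand
`a ≤ n • b + (a - n • b)⁺`, so `a` lies in the ℓ-ideal generated by `b` and `(a - n • b)⁺`;
on the other hand, if `a ≤ m • (b + x)` with `x ≥ 0`, then `a - m • b ≤ m • x`, so
`(a - m • b)⁺ ≤ m • x` lies in the ℓ-ideal generated by `x`. -/

section

variable {G : Type*} [Lattice G] [AddCommGroup G] [AddLeftMono G] {a b x : G}

lemma le_succ_nsmul_add_posPart_sub_nsmul (hb : 0 ≤ b) (a : G) (n : ℕ) :
    a ≤ (n + 1) • (b + (a - n • b)⁺) :=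
  calc a ≤ n • b + (a - n • b)⁺ := sup_eq_add_posPart_sub a (n • b) ▸ le_sup_left
    _ ≤ (n + 1) • b + (n + 1) • (a - n • b)⁺ :=
      add_le_add (nsmul_le_nsmul_left hb n.le_succ)
        (le_self_nsmul (posPart_nonneg _) n.succ_ne_zero)
    _ = (n + 1) • (b + (a - n • b)⁺) := (nsmul_add _ _ _).symm

lemma posPart_sub_nsmul_le_nsmul {m : ℕ} (hx : 0 ≤ x) (h : a ≤ m • (b + x)) :
    (a - m • b)⁺ ≤ m • x :=
  sup_le (sub_le_iff_le_add'.2 (h.trans_eq (nsmul_add _ _ _))) (nsmul_nonneg hx m)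

end

theorem stmt17_general {G : Type*} [Lattice G] [AddCommGroup G]
    [CovariantClass G G (· + ·) (· ≤ ·)]
    (a b : G) (hb : 0 ≤ b) :
    ∃ c : ℕ → G,
      (∀ n : ℕ, 0 ≤ c n) ∧
      (∀ n : ℕ, ∃ m : ℕ, a ≤ m • (b + c n)) ∧
      (∀ x : G, 0 ≤ x → (∃ m : ℕ, a ≤ m • (b + x)) →
        ∃ n : ℕ, ∃ m : ℕ, c n ≤ m • x) :=
  ⟨fun n => (a - n • b)⁺, fun _ => posPart_nonneg _,
    fun n => ⟨n + 1, le_succ_nsmul_add_posPart_sub_nsmul hb a n⟩,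
    fun _ hx ⟨m, hm⟩ => ⟨m, m, posPart_sub_nsmul_le_nsmul hx hm⟩⟩

/-- for an abelian ℓ-group G and a, b ∈ G⁺, the filter
{ ⟨x⟩ : ⟨a⟩ ⊆ ⟨b⟩ ∨ ⟨x⟩ } of Idc G is countably generated: there is a sequence
(c n) of positive elements, each with ⟨a⟩ ⊆ ⟨b⟩ ∨ ⟨c n⟩ (i.e. a ≤ m•(b + c n)
for some m), which is downward cofinal: whenever x ≥ 0 and ⟨a⟩ ⊆ ⟨b⟩ ∨ ⟨x⟩,
some ⟨c n⟩ ⊆ ⟨x⟩. -/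
theorem stmt17 {G : Type*} [Lattice G] [AddCommGroup G]
    [CovariantClass G G (· + ·) (· ≤ ·)]
    (a b : G) (ha : 0 ≤ a) (hb : 0 ≤ b) :
    ∃ c : ℕ → G,
      (∀ n : ℕ, 0 ≤ c n) ∧
      (∀ n : ℕ, ∃ m : ℕ, a ≤ m • (b + c n)) ∧
      (∀ x : G, 0 ≤ x → (∃ m : ℕ, a ≤ m • (b + x)) →
        ∃ n : ℕ, ∃ m : ℕ, c n ≤ m • x) :=
  stmt17_general a b hb
end

section
/- Let n be a nonnegative integer and let b₁, …, bₙ, c be linear functionals on a real vector space E. Then ⋂ᵢ { x : bᵢ(x) ≥ 0 } ⊆ { x : c(x) ≥ 0 } if and only if c lies in the convex cone generated by {b₁, …, bₙ}, i.e., c = Σᵢ λᵢ bᵢ for some λᵢ ≥ 0. -/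
/-!
Induction on the number of constraints. If `c` is already implied by `b 1, …, b n`, we are done.
Otherwise some `y` has `b (i + 1) y ≥ 0` for all `i` and `c y < 0`, which forces `b 0 y < 0`. On
`ker (b 0)` the remaining constraints imply `c`, so by induction `c - ∑ μᵢ • b (i + 1)` vanishes on
`ker (b 0)` and is therefore `t • b 0`; evaluating at `y` shows `t > 0`.
-/

open LinearMap

theorem LinearMap.exists_smul_eq_of_ker_le {𝕜 E : Type*} [Field 𝕜] [AddCommGroup E] [Module 𝕜 E]
    {β g : E →ₗ[𝕜] 𝕜} (h : ker β ≤ ker g) : ∃ t : 𝕜, t • β = g := by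
  have hg : g ∈ Submodule.span 𝕜 (Set.range fun _ : Unit ↦ β) :=
    mem_span_of_iInf_ker_le_ker (by simpa using h)
  rwa [Set.range_const, Submodule.mem_span_singleton] at hg

section Farkas

variable {𝕜 E : Type*} [Field 𝕜] [LinearOrder 𝕜] [IsStrictOrderedRing 𝕜]
  [AddCommGroup E] [Module 𝕜 E]

theorem LinearMap.eq_zero_of_forall_nonneg {c : E →ₗ[𝕜] 𝕜} (h : ∀ x, 0 ≤ c x) : c = 0 :=
  ext fun x ↦ le_antisymm (by simpa using h (-x)) (h x)

theorem exists_nonneg_eq_sum_smul_of_forall_nonneg {n : ℕ} (b : Fin n → E →ₗ[𝕜] 𝕜)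
    (c : E →ₗ[𝕜] 𝕜) (h : ∀ x, (∀ i, 0 ≤ b i x) → 0 ≤ c x) :
    ∃ lam : Fin n → 𝕜, (∀ i, 0 ≤ lam i) ∧ c = ∑ i, lam i • b i := by
  induction n generalizing E with
  | zero => exact ⟨0, fun _ ↦ le_rfl, by simpa using eq_zero_of_forall_nonneg fun x ↦ h x nofun⟩
  | succ n ih =>
    by_cases h_tail : ∀ x, (∀ i, 0 ≤ b (Fin.succ i) x) → 0 ≤ c x
    · obtain ⟨μ, hμ, rfl⟩ := ih (fun i ↦ b i.succ) c h_tail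
      refine ⟨Fin.cons 0 μ, Fin.forall_fin_succ.2 ⟨le_rfl, hμ⟩, ?_⟩
      simp [Fin.sum_univ_succ]
    push Not at h_tail
    obtain ⟨y, hby, hcy⟩ := h_tail
    have hb0y : b 0 y < 0 := by
      by_contra! hb0y
      exact hcy.not_ge (h y (Fin.forall_fin_succ.2 ⟨hb0y, hby⟩))
    obtain ⟨μ, hμ, hμc⟩ := ih (fun i ↦ (b i.succ).comp (ker (b 0)).subtype)
      (c.comp (ker (b 0)).subtype) fun x hx ↦ h x (Fin.forall_fin_succ.2 ⟨x.2.ge, hx⟩)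
    obtain ⟨t, ht⟩ : ∃ t : 𝕜, t • b 0 = c - ∑ i, μ i • b i.succ := by
      refine exists_smul_eq_of_ker_le (le_ker_iff_comp_subtype_eq_zero.2 ?_)
      ext x
      simpa [sub_eq_zero] using congr($hμc x)
    have ht_pos : 0 < t := by
      have hsum : 0 ≤ ∑ i, μ i * b i.succ y :=
        Finset.sum_nonneg fun i _ ↦ mul_nonneg (hμ i) (hby i)
      have hty : t * b 0 y = c y - ∑ i, μ i * b i.succ y := by
        simpa using congr($ht y)
      exact pos_of_mul_neg_left (by linarith) hb0y.le
    refine ⟨Fin.cons t μ, Fin.forall_fin_succ.2 ⟨ht_pos.le, hμ⟩, ?_⟩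
    simp [Fin.sum_univ_succ, ht]

theorem apply_nonneg_of_eq_sum_smul {ι : Type*} [Fintype ι] {b : ι → E →ₗ[𝕜] 𝕜}
    {lam : ι → 𝕜} (hlam : ∀ i, 0 ≤ lam i) {x : E} (hx : ∀ i, 0 ≤ b i x) :
    0 ≤ (∑ i, lam i • b i) x := by
  simpa using Finset.sum_nonneg fun i _ ↦ mul_nonneg (hlam i) (hx i)

end Farkas

/-- Farkas lemma for linear functionals on an arbitrary real
vector space: ⋂ i { bᵢ ≥ 0 } ⊆ { c ≥ 0 } iff c is a nonnegative combination
of the bᵢ. -/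
theorem stmt19 {E : Type*} [AddCommGroup E] [Module ℝ E]
    (n : ℕ) (b : Fin n → E →ₗ[ℝ] ℝ) (c : E →ₗ[ℝ] ℝ) :
    (∀ x : E, (∀ i : Fin n, 0 ≤ b i x) → 0 ≤ c x) ↔
      ∃ lam : Fin n → ℝ, (∀ i, 0 ≤ lam i) ∧ c = ∑ i, lam i • b i :=
  ⟨exists_nonneg_eq_sum_smul_of_forall_nonneg b c,
    fun ⟨_, hlam, hc⟩ _ hx ↦ hc ▸ apply_nonneg_of_eq_sum_smul hlam hx⟩
end
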